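/- arXiv:math/0703905 — 5 statements merged into one kernel-verified Lean document; each statement's English description precedes it below -/
import Mathlib

section
/- If f ∈ L²(ℝ) has a continuous Zak transform Zf : ℝ² → ℂ, then Zf has a zero. -/
open MeasureTheory Real Complex
open scoped FourierTransform ENNReal

noncomputable section

/-- The Zak transform, defined pointwise by its defining series. -/
def Zak (f : ℝ → ℂ) (p : ℝ × ℝ) : ℂ :=
  ∑' ℓ : ℤ, Complex.exp (2 * Real.pi * Complex.I * (ℓ : ℂ) * (p.2 : ℂ)) * f (p.1 - ℓ)

/-- The axis-parallel square with center `c` and side length `2r`. -/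
def cube2 (c : ℝ × ℝ) (r : ℝ) : Set (ℝ × ℝ) :=
  Set.Icc (c.1 - r) (c.1 + r) ×ˢ Set.Icc (c.2 - r) (c.2 + r)

/-- Mean oscillation of `f` over the square of center `c`, side `2r`. -/
def osc2 (f : ℝ × ℝ → ℂ) (c : ℝ × ℝ) (r : ℝ) : ℝ :=
  ⨍ x in cube2 c r, ‖f x - ⨍ y in cube2 c r, f y‖

/-- `f ∈ VMO(ℝ²)`: locally integrable, bounded mean oscillation, and
mean oscillation vanishing uniformly at small scales. -/
def IsVMO2 (f : ℝ × ℝ → ℂ) : Prop :=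
  LocallyIntegrable f volume ∧
  (∃ C : ℝ, ∀ c r, 0 < r → osc2 f c r ≤ C) ∧
  ∀ δ > (0:ℝ), ∃ a > (0:ℝ), ∀ c r, 0 < r → r ≤ a → osc2 f c r ≤ δ

/-- The time-frequency shifts of the Gabor system `G(f,1,1)`. -/
def gaborElem (f : ℝ → ℂ) (m n : ℤ) (x : ℝ) : ℂ :=
  Complex.exp (2 * Real.pi * Complex.I * (m : ℂ) * (x : ℂ)) * f (x - n)

/-- `G(f,1,1)` is a frame for `L²(ℝ)` with frame constants `A, B`. -/
def IsGaborFrame (f : ℝ → ℂ) (A B : ℝ) : Prop :=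
  ∀ g : ℝ → ℂ, MemLp g 2 volume →
    A * (∫ x : ℝ, ‖g x‖ ^ 2) ≤
        (∑' mn : ℤ × ℤ, ‖∫ x : ℝ, g x * (starRingEnd ℂ) (gaborElem f mn.1 mn.2 x)‖ ^ 2) ∧
    (∑' mn : ℤ × ℤ, ‖∫ x : ℝ, g x * (starRingEnd ℂ) (gaborElem f mn.1 mn.2 x)‖ ^ 2) ≤
        B * (∫ x : ℝ, ‖g x‖ ^ 2)

/-- The Fourier transform on `ℝ²`, defined pointwise. -/
def fourier2 (g : ℝ × ℝ → ℂ) (ξ : ℝ × ℝ) : ℂ :=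
  ∫ x : ℝ × ℝ, Complex.exp (-(2 * Real.pi * ((x.1 * ξ.1 + x.2 * ξ.2 : ℝ) : ℂ)) * Complex.I) * g x

/-- `F` is the `L²`-Fourier transform of `f` on `ℝ` (distributional characterization). -/
def IsFourierL2₁ (f F : ℝ → ℂ) : Prop :=
  MemLp f 2 volume ∧ MemLp F 2 volume ∧
    ∀ φ : SchwartzMap ℝ ℂ, ∫ ξ : ℝ, F ξ * φ ξ = ∫ x : ℝ, f x * 𝓕 (⇑φ) x

/-- `F` is the `L²`-Fourier transform of `f` on `ℝ²` (distributional characterization). -/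
def IsFourierL2₂ (f F : ℝ × ℝ → ℂ) : Prop :=
  MemLp f 2 volume ∧ MemLp F 2 volume ∧
    ∀ φ : SchwartzMap (ℝ × ℝ) ℂ, ∫ ξ : ℝ × ℝ, F ξ * φ ξ = ∫ x : ℝ × ℝ, f x * fourier2 (⇑φ) x

/-- `f ∈ Hˢ(ℝ)`, the inhomogeneous `L²`-Sobolev space of order `s`. -/
def MemSobolev (s : ℝ) (f : ℝ → ℂ) : Prop :=
  MemLp f 2 volume ∧
    ∃ F : ℝ → ℂ, IsFourierL2₁ f F ∧
      Integrable (fun ξ : ℝ => ‖F ξ‖ ^ 2 * (1 + ξ ^ 2) ^ s) volume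

lemma exp_sum_log_ratio (g : ℕ → ℂ) (hg : ∀ k, g k ≠ 0) (j : ℕ) :
    Complex.exp (∑ k ∈ Finset.range j, Complex.log (g (k+1) / g k)) = g j / g 0 := by
  induction j with
  | zero => simp [div_self (hg 0)]
  | succ j ih =>
    rw [Finset.sum_range_succ, Complex.exp_add, ih,
      Complex.exp_log (div_ne_zero (hg (j+1)) (hg j))]
    rw [div_mul_div_comm, mul_comm (g j) (g (j+1)), mul_div_mul_right _ _ (hg j)]

lemma int_valued_const (u : ℝ → ℂ) (hu : Continuous u)
    (h : ∀ y ∈ Set.Icc (0:ℝ) 1, ∃ k : ℤ, u y = k * (2 * Real.pi * Complex.I)) :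
    u 1 = u 0 := by
  obtain ⟨k0, hk0⟩ := h 0 (by simp)
  obtain ⟨k1, hk1⟩ := h 1 (by simp)
  have hkeq : k1 = k0 := by
    by_contra hne
    have him : ∀ y ∈ Set.Icc (0:ℝ) 1, ∃ k : ℤ, (u y).im = 2 * Real.pi * k := by
      intro y hy
      obtain ⟨k, hk⟩ := h y hy
      exact ⟨k, by rw [hk]; simp [Complex.mul_im]; ring⟩
    set r : ℝ → ℝ := fun y => (u y).im with hr
    have hrc : ContinuousOn r (Set.uIcc (0:ℝ) 1) :=
      (Complex.continuous_im.comp hu).continuousOn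
    have hmid : (2 * Real.pi * (min k0 k1) + Real.pi) ∈ Set.uIcc (r 0) (r 1) := by
      have h0 : r 0 = 2 * Real.pi * k0 := by rw [hr]; simp [hk0, Complex.mul_im]; ring
      have h1 : r 1 = 2 * Real.pi * k1 := by rw [hr]; simp [hk1, Complex.mul_im]; ring
      rw [h0, h1]
      have hpi := Real.pi_pos
      rcases lt_or_gt_of_ne hne with hlt | hlt
      · have : (k1 : ℝ) < k0 := by exact_mod_cast hlt
        have hmin : (min k0 k1 : ℤ) = k1 := min_eq_right hlt.le
        rw [Set.mem_uIcc]
        right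
        refine ⟨by rw [hmin]; nlinarith, ?_⟩
        rw [hmin]
        have : (k1 : ℝ) + 1 ≤ k0 := by exact_mod_cast hlt
        nlinarith
      · have : (k0 : ℝ) < k1 := by exact_mod_cast hlt
        have hmin : (min k0 k1 : ℤ) = k0 := min_eq_left hlt.le
        rw [Set.mem_uIcc]
        left
        refine ⟨by rw [hmin]; nlinarith, ?_⟩
        rw [hmin]
        have : (k0 : ℝ) + 1 ≤ k1 := by exact_mod_cast hlt
        nlinarith
    obtain ⟨y, hy, hyv⟩ := intermediate_value_uIcc hrc hmid
    have hy' : y ∈ Set.Icc (0:ℝ) 1 := by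
      rwa [Set.uIcc_of_le (by norm_num : (0:ℝ) ≤ 1)] at hy
    obtain ⟨k, hk⟩ := him y hy'
    rw [hr] at hyv
    simp only [hyv] at hk
    have hpi := Real.pi_pos
    set m := k0 ⊓ k1 with hm
    have h2 : (m:ℝ) * 2 + 1 = (k:ℝ) * 2 := by nlinarith
    have h3 : m * 2 + 1 = k * 2 := by exact_mod_cast h2
    omega
  rw [hk0, hk1, hkeq]

theorem quasi_periodic_has_zero (F : ℝ × ℝ → ℂ) (hc : Continuous F)
    (hqx : ∀ x y : ℝ, F (x + 1, y) = Complex.exp (2 * Real.pi * Complex.I * y) * F (x, y))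
    (hqy : ∀ x y : ℝ, F (x, y + 1) = F (x, y)) :
    ∃ p : ℝ × ℝ, F p = 0 := by
  by_contra hno
  push_neg at hno
  set K : Set (ℝ × ℝ) := Set.Icc (0:ℝ) 1 ×ˢ Set.Icc (0:ℝ) 1 with hKdef
  have hK : IsCompact K := isCompact_Icc.prod isCompact_Icc
  have hKne : K.Nonempty := ⟨(0, 0), by constructor <;> simp⟩
  obtain ⟨p₀, hp₀K, hp₀⟩ := hK.exists_isMinOn hKne hc.norm.continuousOn
  set m := ‖F p₀‖ with hmdef
  have hm : 0 < m := norm_pos_iff.mpr (hno p₀)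
  obtain ⟨δ, hδ, hδ'⟩ := Metric.uniformContinuousOn_iff_le.mp
    (hK.uniformContinuousOn_of_continuous hc.continuousOn) (m / 2) (by positivity)
  obtain ⟨N0, hN0⟩ := exists_nat_one_div_lt hδ
  set n : ℕ := N0 + 1 with hndef
  have hnpos : (0:ℝ) < n := by positivity
  have hn : 1 / (n:ℝ) ≤ δ := by
    have : 1 / ((N0:ℝ) + 1) < δ := hN0
    simpa [hndef] using this.le
  -- key: ratios lie in the slit plane
  have key : ∀ p q : ℝ × ℝ, p ∈ K → q ∈ K → dist p q ≤ 1 / n →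
      F p / F q ∈ Complex.slitPlane := by
    intro p q hp hq hd
    have h1 : dist (F p) (F q) ≤ m / 2 := hδ' p hp q hq (hd.trans hn)
    have hq0 : F q ≠ 0 := hno q
    have hmq : m ≤ ‖F q‖ := hp₀ hq
    have hb : ‖F p / F q - 1‖ ≤ 1 / 2 := by
      have he : F p / F q - 1 = (F p - F q) / F q := by field_simp
      rw [he, norm_div, ← dist_eq_norm]
      calc dist (F p) (F q) / ‖F q‖ ≤ (m / 2) / m := by
            apply div_le_div₀ (by positivity) h1 hm hmq
        _ = 1 / 2 := by field_simp
    refine Or.inl ?_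
    have h2 : |(F p / F q - 1).re| ≤ ‖F p / F q - 1‖ := Complex.abs_re_le_norm _
    have h3 : (F p / F q - 1).re = (F p / F q).re - 1 := by simp
    rw [h3] at h2
    have := abs_le.mp (h2.trans hb)
    linarith [this.1]
  -- the clamped grid points
  set a : ℕ → ℝ → ℝ := fun k x => min (max x 0) ((k:ℝ) / n) with hadef
  have ha0 : ∀ x, a 0 x = 0 := fun x => by
    simp [hadef, min_eq_right (le_max_right x 0)]
  have haK : ∀ k, k ≤ n → ∀ x, a k x ∈ Set.Icc (0:ℝ) 1 := by
    intro k hk x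
    constructor
    · exact le_min (le_max_right x 0) (by positivity)
    · refine (min_le_right _ _).trans ?_
      rw [div_le_one hnpos]
      exact_mod_cast hk
  have han : ∀ x ∈ Set.Icc (0:ℝ) 1, a n x = x := by
    intro x hx
    have : ((n:ℝ)) / n = 1 := div_self hnpos.ne'
    rw [hadef]
    simp only [this]
    rw [max_eq_left hx.1, min_eq_left hx.2]
  have hastep : ∀ k : ℕ, ∀ x : ℝ, dist (a (k+1) x) (a k x) ≤ 1 / n := by
    intro k x
    rw [Real.dist_eq, abs_le]
    have hmono : a k x ≤ a (k+1) x := by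
      apply min_le_min le_rfl
      gcongr
      exact_mod_cast Nat.le_succ k
    have hup : a (k+1) x ≤ a k x + 1 / n := by
      have hc : ((k:ℝ) + 1) / n = (k:ℝ) / n + 1 / n := by ring
      rw [hadef]
      simp only [Nat.cast_add, Nat.cast_one, hc]
      calc min (max x 0) ((k:ℝ)/n + 1/n)
          ≤ min (max x 0 + 1/n) ((k:ℝ)/n + 1/n) := by
            apply min_le_min _ le_rfl
            linarith [one_div_pos.mpr hnpos]
        _ = min (max x 0) ((k:ℝ)/n) + 1/n := by rw [min_add_add_right]
    constructor
    · linarith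
    · linarith
  -- the logarithm lift
  set φ : ℝ × ℝ → ℂ := fun p =>
    Complex.log (F (0, 0))
    + ∑ k ∈ Finset.range n, Complex.log (F (a (k+1) p.1, 0) / F (a k p.1, 0))
    + ∑ k ∈ Finset.range n, Complex.log (F (a n p.1, a (k+1) p.2) / F (a n p.1, a k p.2))
    with hφdef
  have hmemH : ∀ (k : ℕ) (x : ℝ), k ≤ n → ((a k x, (0:ℝ)) : ℝ × ℝ) ∈ K := by
    intro k x hk
    exact ⟨haK k hk x, by simp⟩
  have hmemV : ∀ (k : ℕ) (x y : ℝ), k ≤ n → ((a n x, a k y) : ℝ × ℝ) ∈ K :=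
    fun k x y hk => ⟨haK n le_rfl x, haK k hk y⟩
  have hdH : ∀ (k : ℕ) (x : ℝ), dist ((a (k+1) x, (0:ℝ)) : ℝ × ℝ) (a k x, (0:ℝ)) ≤ 1/n := by
    intro k x
    rw [Prod.dist_eq]
    apply max_le (hastep k x) (by simp)
  have hdV : ∀ (k : ℕ) (x y : ℝ), dist ((a n x, a (k+1) y) : ℝ × ℝ) (a n x, a k y) ≤ 1/n := by
    intro k x y
    rw [Prod.dist_eq]
    apply max_le (by simp) (hastep k y)
  have hconta : ∀ k : ℕ, Continuous (a k) := by
    intro k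
    exact (continuous_id.max continuous_const).min continuous_const
  have hφcont : Continuous φ := by
    rw [hφdef]
    apply Continuous.add
    apply Continuous.add continuous_const
    · apply continuous_finset_sum
      intro k hk
      have hk' : k + 1 ≤ n := Finset.mem_range.mp hk
      apply Continuous.clog
      · exact Continuous.div (hc.comp (((hconta (k+1)).comp continuous_fst).prodMk
          continuous_const)) (hc.comp (((hconta k).comp continuous_fst).prodMk
          continuous_const)) (fun p => hno _)
      · intro p
        exact key _ _ (hmemH (k+1) p.1 hk') (hmemH k p.1 ((Nat.le_succ k).trans hk'))
          (hdH k p.1)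
    · apply continuous_finset_sum
      intro k hk
      have hk' : k + 1 ≤ n := Finset.mem_range.mp hk
      apply Continuous.clog
      · exact Continuous.div (hc.comp (((hconta n).comp continuous_fst).prodMk
          ((hconta (k+1)).comp continuous_snd)))
          (hc.comp (((hconta n).comp continuous_fst).prodMk
          ((hconta k).comp continuous_snd))) (fun p => hno _)
      · intro p
        exact key _ _ (hmemV (k+1) p.1 p.2 hk') (hmemV k p.1 p.2 ((Nat.le_succ k).trans hk'))
          (hdV k p.1 p.2)
  have hexp : ∀ p : ℝ × ℝ, Complex.exp (φ p) = F (a n p.1, a n p.2) := by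
    intro p
    rw [hφdef]
    simp only
    rw [Complex.exp_add, Complex.exp_add,
      exp_sum_log_ratio (fun k => F (a k p.1, 0)) (fun k => hno _),
      exp_sum_log_ratio (fun k => F (a n p.1, a k p.2)) (fun k => hno _),
      Complex.exp_log (hno _), ha0 p.1, ha0 p.2]
    field_simp
    exact mul_div_cancel_left₀ _ (mul_ne_zero (hno _) (hno _))
  have hexpK : ∀ p ∈ K, Complex.exp (φ p) = F p := by
    intro p hp
    rw [hexp p, han p.1 hp.1, han p.2 hp.2]
  -- edge functions
  set A : ℝ → ℂ := fun y => φ (1, y) - φ (0, y) - 2 * Real.pi * Complex.I * y with hAdef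
  set B : ℝ → ℂ := fun x => φ (x, 1) - φ (x, 0) with hBdef
  have hAcont : Continuous A := by
    apply Continuous.sub
    apply Continuous.sub
    · exact hφcont.comp (continuous_const.prodMk continuous_id)
    · exact hφcont.comp (continuous_const.prodMk continuous_id)
    · exact continuous_const.mul Complex.continuous_ofReal
  have hBcont : Continuous B := by
    apply Continuous.sub
    · exact hφcont.comp (continuous_id.prodMk continuous_const)
    · exact hφcont.comp (continuous_id.prodMk continuous_const)
  have hmemK : ∀ y ∈ Set.Icc (0:ℝ) 1, ((1:ℝ), y) ∈ K ∧ ((0:ℝ), y) ∈ K := by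
    intro y hy
    exact ⟨⟨by simp, hy⟩, ⟨by simp, hy⟩⟩
  have hAint : ∀ y ∈ Set.Icc (0:ℝ) 1, ∃ k : ℤ, A y = k * (2 * Real.pi * Complex.I) := by
    intro y hy
    rw [← Complex.exp_eq_one_iff]
    rw [hAdef]
    simp only
    rw [Complex.exp_sub, Complex.exp_sub, hexpK _ (hmemK y hy).1, hexpK _ (hmemK y hy).2]
    have h1 : F (1, y) = Complex.exp (2 * Real.pi * Complex.I * y) * F (0, y) := by
      have := hqx 0 y
      rwa [zero_add] at this
    rw [h1]
    have h2 : F (0, y) ≠ 0 := hno _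
    have h3 : Complex.exp (2 * Real.pi * Complex.I * y) ≠ 0 := Complex.exp_ne_zero _
    field_simp
  have hBint : ∀ x ∈ Set.Icc (0:ℝ) 1, ∃ k : ℤ, B x = k * (2 * Real.pi * Complex.I) := by
    intro x hx
    rw [← Complex.exp_eq_one_iff]
    rw [hBdef]
    simp only
    rw [Complex.exp_sub, hexpK _ ⟨hx, by simp⟩, hexpK _ ⟨hx, by simp⟩]
    have h1 : F (x, 1) = F (x, 0) := by
      have := hqy x 0
      rwa [zero_add] at this
    rw [h1, div_self (hno _)]
  have hA10 : A 1 = A 0 := int_valued_const A hAcont hAint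
  have hB10 : B 1 = B 0 := int_valued_const B hBcont hBint
  rw [hAdef] at hA10
  rw [hBdef] at hB10
  simp only [Complex.ofReal_one, Complex.ofReal_zero, mul_one, mul_zero, sub_zero] at hA10 hB10
  have hcontra : (2 * (Real.pi:ℂ) * Complex.I) = 0 := by linear_combination hB10 - hA10
  have : (Real.pi : ℂ) ≠ 0 := Complex.ofReal_ne_zero.mpr Real.pi_ne_zero
  simp [this, Complex.I_ne_zero] at hcontra


lemma Zak_per_y (f : ℝ → ℂ) (x y : ℝ) : Zak f (x, y + 1) = Zak f (x, y) := by
  unfold Zak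
  refine tsum_congr fun ℓ => ?_
  congr 1
  push_cast
  have : 2 * (Real.pi:ℂ) * Complex.I * ℓ * (y + 1)
      = 2 * (Real.pi:ℂ) * Complex.I * ℓ * y + (ℓ:ℂ) * (2 * (Real.pi:ℂ) * Complex.I) := by ring
  rw [this, Complex.exp_add, Complex.exp_int_mul_two_pi_mul_I, mul_one]

lemma Zak_per_x (f : ℝ → ℂ) (x y : ℝ) :
    Zak f (x + 1, y) = Complex.exp (2 * Real.pi * Complex.I * y) * Zak f (x, y) := by
  unfold Zak
  rw [← tsum_mul_left]
  rw [← (Equiv.addRight (1:ℤ)).tsum_eq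
    (fun ℓ : ℤ => Complex.exp (2 * Real.pi * Complex.I * (ℓ : ℂ) * (y : ℂ)) * f (x + 1 - ℓ))]
  refine tsum_congr fun m => ?_
  simp only [Equiv.coe_addRight]
  rw [← mul_assoc, ← Complex.exp_add]
  push_cast
  congr 2
  · ring
  · ring

/-- if `f ∈ L²(ℝ)` has continuous Zak transform, then `Zf` has a zero. -/
theorem stmt3 (f : ℝ → ℂ) (hf : MemLp f 2 volume) (hcont : Continuous (Zak f)) :
    ∃ p : ℝ × ℝ, Zak f p = 0 := by
  exact quasi_periodic_has_zero (Zak f) hcont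
    (fun x y => Zak_per_x f x y) (fun x y => Zak_per_y f x y)
end
end

section
/- Any continuous function F : ℝ² → ℂ satisfying F(x+1,y) = e^{2πiy} F(x,y) and F(x,y+1) = F(x,y) for all (x,y) ∈ ℝ² must vanish at some point; equivalently, there is no continuous nowhere-vanishing function satisfying these quasi-periodicity relations (the winding number of F restricted to the boundary of the unit square around 0 would be nonzero). -/
open MeasureTheory Real Complex
open scoped FourierTransform ENNReal

noncomputable section

/-- Telescoping product of ratios. -/
lemma zak_tele (f : ℕ → ℂ) (hf : ∀ k, f k ≠ 0) :
    ∀ n, ∏ k ∈ Finset.range n, f (k + 1) / f k = f n / f 0 := by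
  intro n
  induction n with
  | zero => simp [div_self (hf 0)]
  | succ n ih =>
      rw [Finset.prod_range_succ, ih, div_mul_div_comm, mul_comm (f 0) (f n),
        mul_div_mul_left _ _ (hf n)]

/-- A continuous function on `[0,1]` taking values in `2πiℤ` has equal endpoints. -/
lemma zak_int_const (f : ℝ → ℂ) (hf : ContinuousOn f (Set.Icc 0 1))
    (hint : ∀ t ∈ Set.Icc (0:ℝ) 1, ∃ n : ℤ, f t = n) : f 0 = f 1 := by
  obtain ⟨n0, h0⟩ := hint 0 (by norm_num)
  obtain ⟨n1, h1⟩ := hint 1 (by norm_num)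
  rcases lt_trichotomy n0 n1 with h | h | h
  · exfalso
    have hu : ContinuousOn (fun t => (f t).re) (Set.Icc 0 1) :=
      Complex.continuous_re.comp_continuousOn hf
    have hu0 : (f 0).re = (n0 : ℝ) := by rw [h0]; simp
    have hu1 : (f 1).re = (n1 : ℝ) := by rw [h1]; simp
    have hc : ((n0 : ℝ) + 1/2) ∈ Set.Icc ((fun t => (f t).re) 0) ((fun t => (f t).re) 1) := by
      simp only [hu0, hu1]
      constructor
      · linarith
      · have : (n0 : ℝ) + 1 ≤ n1 := by exact_mod_cast h
        linarith
    obtain ⟨t, ht, hteq⟩ := intermediate_value_Icc (by norm_num : (0:ℝ) ≤ 1) hu hc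
    obtain ⟨nt, hnt⟩ := hint t ht
    have : (nt : ℝ) = (n0 : ℝ) + 1/2 := by
      have h' : (f t).re = (n0 : ℝ) + 1/2 := hteq
      rw [hnt] at h'
      simpa using h'
    have h2 : ((2 * nt : ℤ) : ℝ) = ((2 * n0 + 1 : ℤ) : ℝ) := by push_cast; linarith
    have := Int.cast_injective h2
    omega
  · rw [h0, h1, h]
  · exfalso
    have hu : ContinuousOn (fun t => (f t).re) (Set.Icc 0 1) :=
      Complex.continuous_re.comp_continuousOn hf
    have hu0 : (f 0).re = (n0 : ℝ) := by rw [h0]; simp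
    have hu1 : (f 1).re = (n1 : ℝ) := by rw [h1]; simp
    have hc : ((n1 : ℝ) + 1/2) ∈ Set.Icc ((fun t => (f t).re) 1) ((fun t => (f t).re) 0) := by
      simp only [hu0, hu1]
      constructor
      · linarith
      · have : (n1 : ℝ) + 1 ≤ n0 := by exact_mod_cast h
        linarith
    obtain ⟨t, ht, hteq⟩ := intermediate_value_Icc' (by norm_num : (0:ℝ) ≤ 1) hu hc
    obtain ⟨nt, hnt⟩ := hint t ht
    have : (nt : ℝ) = (n1 : ℝ) + 1/2 := by
      have h' : (f t).re = (n1 : ℝ) + 1/2 := hteq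
      rw [hnt] at h'
      simpa using h'
    have h2 : ((2 * nt : ℤ) : ℝ) = ((2 * n1 + 1 : ℤ) : ℝ) := by push_cast; linarith
    have := Int.cast_injective h2
    omega

/-- A continuous nonvanishing function on `ℝ²` has a continuous logarithm on the unit
square. -/
lemma zak_exists_log (F : ℝ × ℝ → ℂ) (hcont : Continuous F) (hF : ∀ p, F p ≠ 0) :
    ∃ g : ℝ × ℝ → ℂ, ContinuousOn g (Set.Icc 0 1) ∧
      ∀ p ∈ Set.Icc (0 : ℝ × ℝ) 1, Complex.exp (g p) = F p := by
  set K : Set (ℝ × ℝ) := Set.Icc 0 1 with hK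
  have hKc : IsCompact K := isCompact_Icc
  have hKne : K.Nonempty := ⟨0, by simp [hK, Set.mem_Icc, Prod.le_def]⟩
  obtain ⟨p₀, hp₀K, hmin'⟩ := hKc.exists_isMinOn hKne hcont.norm.continuousOn
  have hmin : ∀ q ∈ K, ‖F p₀‖ ≤ ‖F q‖ := fun q hq => hmin' hq
  set m := ‖F p₀‖ with hm
  have hm0 : 0 < m := norm_pos_iff.2 (hF p₀)
  have hUC := hKc.uniformContinuousOn_of_continuous hcont.continuousOn
  rw [Metric.uniformContinuousOn_iff_le] at hUC
  obtain ⟨δ, hδ0, hδ⟩ := hUC (m/2) (by positivity)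
  obtain ⟨N, hN⟩ := exists_nat_gt (1/δ)
  have hN0 : 0 < (N : ℝ) := lt_trans (by positivity) hN
  -- scaled points stay in K
  have hscale : ∀ p ∈ K, ∀ t : ℝ, 0 ≤ t → t ≤ 1 → t • p ∈ K := by
    intro p hp t ht0 ht1
    simp only [hK, Set.mem_Icc, Prod.le_def] at hp ⊢
    obtain ⟨⟨h01, h02⟩, ⟨h11, h12⟩⟩ := hp
    simp only [Prod.smul_fst, Prod.smul_snd, smul_eq_mul, Prod.fst_zero, Prod.snd_zero,
      Prod.fst_one, Prod.snd_one] at *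
    refine ⟨⟨mul_nonneg ht0 h01, mul_nonneg ht0 h02⟩, ⟨?_, ?_⟩⟩
    · calc t * p.1 ≤ 1 * p.1 := by nlinarith
        _ ≤ 1 := by linarith
    · calc t * p.2 ≤ 1 * p.2 := by nlinarith
        _ ≤ 1 := by linarith
  have hfrac : ∀ k : ℕ, k ≤ N → 0 ≤ (k : ℝ) / N ∧ (k : ℝ) / N ≤ 1 := by
    intro k hk
    constructor
    · positivity
    · rw [div_le_one hN0]; exact_mod_cast hk
  have hnormp : ∀ p ∈ K, ‖p‖ ≤ 1 := by
    intro p hp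
    simp only [hK, Set.mem_Icc, Prod.le_def] at hp
    obtain ⟨⟨h01, h02⟩, ⟨h11, h12⟩⟩ := hp
    rw [Prod.norm_def]
    simp only [Prod.fst_zero, Prod.snd_zero, Prod.fst_one, Prod.snd_one] at h01 h02 h11 h12
    refine max_le ?_ ?_ <;> rw [Real.norm_eq_abs, abs_le] <;> constructor <;> linarith
  -- the successive values are close
  have hclose : ∀ p ∈ K, ∀ k : ℕ, k < N →
      ‖F ((((k : ℝ) + 1) / N) • p) - F (((k : ℝ) / N) • p)‖ ≤ m / 2 := by
    intro p hp k hk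
    have hk1 : ((k : ℝ) + 1) / N = ((k + 1 : ℕ) : ℝ) / N := by push_cast; ring
    have hmem1 : (((k : ℝ) + 1) / N) • p ∈ K := by
      rw [hk1]
      exact hscale p hp _ (hfrac (k+1) hk).1 (hfrac (k+1) hk).2
    have hmem2 : (((k : ℝ)) / N) • p ∈ K :=
      hscale p hp _ (hfrac k hk.le).1 (hfrac k hk.le).2
    have hdist : dist ((((k : ℝ) + 1) / N) • p) (((k : ℝ) / N) • p) ≤ δ := by
      rw [dist_eq_norm, ← sub_smul]
      have h1 : ((k : ℝ) + 1) / N - (k : ℝ) / N = 1 / N := by field_simp; ring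
      rw [h1, norm_smul, Real.norm_eq_abs, abs_of_pos (by positivity)]
      calc 1 / (N : ℝ) * ‖p‖ ≤ 1 / N * 1 := by
            have := hnormp p hp
            have h2 : (0:ℝ) ≤ 1 / N := by positivity
            nlinarith
        _ = 1 / N := by ring
        _ ≤ δ := by
            rw [div_le_iff₀ hN0]
            rw [div_lt_iff₀ hδ0] at hN
            nlinarith
    have := hδ _ hmem1 _ hmem2 hdist
    rwa [dist_eq_norm] at this
  -- the ratio lies in the slit plane
  have hratio : ∀ p ∈ K, ∀ k : ℕ, k < N →
      F ((((k : ℝ) + 1) / N) • p) / F (((k : ℝ) / N) • p) ∈ Complex.slitPlane := by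
    intro p hp k hk
    set a := F ((((k : ℝ) + 1) / N) • p)
    set b := F (((k : ℝ) / N) • p)
    have hb : b ≠ 0 := hF _
    have hmemb : (((k : ℝ)) / N) • p ∈ K :=
      hscale p hp _ (hfrac k hk.le).1 (hfrac k hk.le).2
    have hbm : m ≤ ‖b‖ := hmin _ hmemb
    have h1 : ‖a / b - 1‖ ≤ 1 / 2 := by
      rw [show a / b - 1 = (a - b) / b by field_simp]
      rw [norm_div]
      rw [div_le_div_iff₀ (norm_pos_iff.2 hb) (by norm_num : (0:ℝ) < 2)]
      have := hclose p hp k hk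
      nlinarith
    have h2 : |(a / b).re - 1| ≤ 1 / 2 := by
      have := Complex.abs_re_le_norm (a / b - 1)
      simp only [Complex.sub_re, Complex.one_re] at this
      calc |(a / b).re - 1| ≤ ‖a / b - 1‖ := this
        _ ≤ 1/2 := h1
    rw [Complex.mem_slitPlane_iff]
    left
    have := abs_le.1 h2
    linarith [this.1]
  refine ⟨fun p => Complex.log (F 0) + ∑ k ∈ Finset.range N,
      Complex.log (F ((((k : ℝ) + 1) / N) • p) / F (((k : ℝ) / N) • p)), ?_, ?_⟩
  · -- continuity
    apply ContinuousOn.add continuousOn_const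
    apply continuousOn_finset_sum
    intro k hk
    rw [Finset.mem_range] at hk
    intro p hp
    apply ContinuousAt.continuousWithinAt
    have hinner : Continuous fun q : ℝ × ℝ =>
        F ((((k : ℝ) + 1) / N) • q) / F (((k : ℝ) / N) • q) :=
      (hcont.comp (by fun_prop :
          Continuous fun q : ℝ × ℝ => (((k : ℝ) + 1) / N) • q)).div
        (hcont.comp (by fun_prop :
          Continuous fun q : ℝ × ℝ => ((k : ℝ) / N) • q)) (fun q => hF _)
    exact hinner.continuousAt.clog (hratio p hp k hk)
  · -- exponential identity
    intro p hp
    rw [Complex.exp_add, Complex.exp_sum, Complex.exp_log (hF 0)]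
    have hterm : ∀ k ∈ Finset.range N,
        Complex.exp (Complex.log (F ((((k : ℝ) + 1) / N) • p) / F (((k : ℝ) / N) • p)))
          = F ((((k : ℝ) + 1) / N) • p) / F (((k : ℝ) / N) • p) := by
      intro k _
      exact Complex.exp_log (div_ne_zero (hF _) (hF _))
    rw [Finset.prod_congr rfl hterm]
    have hre : ∀ k ∈ Finset.range N,
        F ((((k : ℝ) + 1) / N) • p) / F (((k : ℝ) / N) • p)
          = F ((((k + 1 : ℕ) : ℝ) / N) • p) / F ((((k : ℕ) : ℝ) / N) • p) := by
      intro k _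
      congr 3
      push_cast
      ring
    have htel := zak_tele (fun j : ℕ => F ((((j : ℕ) : ℝ) / N) • p)) (fun k => hF _) N
    rw [Finset.prod_congr rfl hre, htel]
    rw [show ((N:ℕ):ℝ)/(N:ℝ) = 1 from div_self hN0.ne',
      show (((0:ℕ):ℝ)/(N:ℝ)) = 0 by simp, one_smul, zero_smul]
    rw [mul_comm]
    exact div_mul_cancel₀ _ (hF 0)

/-- any continuous `F : ℝ² → ℂ` satisfying the quasi-periodicity
relations must vanish somewhere. -/
theorem stmt4 (F : ℝ × ℝ → ℂ) (hcont : Continuous F)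
    (hqp1 : ∀ x y : ℝ, F (x + 1, y) = Complex.exp (2 * Real.pi * Complex.I * (y : ℂ)) * F (x, y))
    (hqp2 : ∀ x y : ℝ, F (x, y + 1) = F (x, y)) :
    ∃ p : ℝ × ℝ, F p = 0 := by
  by_contra hcon
  push_neg at hcon
  obtain ⟨g, hgc, hge⟩ := zak_exists_log F hcont hcon
  have hmem : ∀ x y : ℝ, x ∈ Set.Icc (0:ℝ) 1 → y ∈ Set.Icc (0:ℝ) 1 →
      ((x, y) : ℝ × ℝ) ∈ Set.Icc (0 : ℝ × ℝ) 1 := by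
    intro x y hx hy
    simp only [Set.mem_Icc, Prod.le_def] at *
    exact ⟨⟨hx.1, hy.1⟩, ⟨hx.2, hy.2⟩⟩
  have h01 : (0:ℝ) ∈ Set.Icc (0:ℝ) 1 := by norm_num
  have h11 : (1:ℝ) ∈ Set.Icc (0:ℝ) 1 := by norm_num
  set c : ℂ := 2 * Real.pi * Complex.I with hc
  have hcne : c ≠ 0 := by
    simp [hc, Complex.I_ne_zero, Real.pi_ne_zero, Complex.ofReal_ne_zero]
  -- the horizontal comparison function
  set a : ℝ → ℂ := fun y => (g (1, y) - g (0, y) - c * y) / c with ha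
  have hac : ContinuousOn a (Set.Icc 0 1) := by
    apply ContinuousOn.div_const
    apply ContinuousOn.sub
    · apply ContinuousOn.sub
      · exact hgc.comp (Continuous.continuousOn
            (continuous_const.prodMk continuous_id))
          (fun y hy => hmem 1 y h11 hy)
      · exact hgc.comp (Continuous.continuousOn
            (continuous_const.prodMk continuous_id))
          (fun y hy => hmem 0 y h01 hy)
    · exact (continuous_const.mul Complex.continuous_ofReal).continuousOn
  have haint : ∀ y ∈ Set.Icc (0:ℝ) 1, ∃ n : ℤ, a y = n := by
    intro y hy
    have he1 : Complex.exp (g (1, y)) = F (1, y) := hge _ (hmem 1 y h11 hy)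
    have he0 : Complex.exp (g (0, y)) = F (0, y) := hge _ (hmem 0 y h01 hy)
    have hq : F (1, y) = Complex.exp (c * y) * F (0, y) := by
      have := hqp1 0 y
      rwa [zero_add] at this
    have hexp1 : Complex.exp (g (1, y) - g (0, y) - c * y) = 1 := by
      rw [Complex.exp_sub, Complex.exp_sub, he1, he0, hq, div_div,
        mul_comm (F (0, y)) (Complex.exp (c * (y : ℂ)))]
      exact div_self (mul_ne_zero (Complex.exp_ne_zero _) (hcon _))
    obtain ⟨n, hn⟩ := Complex.exp_eq_one_iff.1 hexp1
    refine ⟨n, ?_⟩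
    rw [ha]
    simp only
    rw [hn]
    field_simp [hcne, hc]
    rw [hc]; ring
  -- the vertical comparison function
  set b : ℝ → ℂ := fun x => (g (x, 1) - g (x, 0)) / c with hb
  have hbc : ContinuousOn b (Set.Icc 0 1) := by
    apply ContinuousOn.div_const
    apply ContinuousOn.sub
    · exact hgc.comp (Continuous.continuousOn
          (continuous_id.prodMk continuous_const))
        (fun x hx => hmem x 1 hx h11)
    · exact hgc.comp (Continuous.continuousOn
          (continuous_id.prodMk continuous_const))
        (fun x hx => hmem x 0 hx h01)
  have hbint : ∀ x ∈ Set.Icc (0:ℝ) 1, ∃ n : ℤ, b x = n := by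
    intro x hx
    have he1 : Complex.exp (g (x, 1)) = F (x, 1) := hge _ (hmem x 1 hx h11)
    have he0 : Complex.exp (g (x, 0)) = F (x, 0) := hge _ (hmem x 0 hx h01)
    have hq : F (x, 1) = F (x, 0) := by
      have := hqp2 x 0
      rwa [zero_add] at this
    have hexp1 : Complex.exp (g (x, 1) - g (x, 0)) = 1 := by
      rw [Complex.exp_sub, he1, he0, hq, div_self (hcon _)]
    obtain ⟨n, hn⟩ := Complex.exp_eq_one_iff.1 hexp1
    refine ⟨n, ?_⟩
    rw [hb]
    simp only
    rw [hn]
    field_simp [hcne, hc]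
    rw [hc]; ring
  have haeq : a 0 = a 1 := zak_int_const a hac haint
  have hbeq : b 0 = b 1 := zak_int_const b hbc hbint
  rw [ha] at haeq
  rw [hb] at hbeq
  simp only at haeq hbeq
  rw [div_eq_div_iff hcne hcne] at haeq hbeq
  have hkey : c = 0 := by
    push_cast at haeq
    have h1 : g (1, 0) - g (0, 0) = g (1, 1) - g (0, 1) - c := by
      have := haeq
      simp only [Complex.ofReal_zero, Complex.ofReal_one, mul_zero, mul_one, sub_zero] at this
      have hcc : (g (1, 0) - g (0, 0)) * c = (g (1, 1) - g (0, 1) - c) * c := by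
        linear_combination this
      exact mul_right_cancel₀ hcne hcc
    have h2 : g (0, 1) - g (0, 0) = g (1, 1) - g (1, 0) := by
      have hcc : (g (0, 1) - g (0, 0)) * c = (g (1, 1) - g (1, 0)) * c := by
        linear_combination hbeq
      exact mul_right_cancel₀ hcne hcc
    linear_combination h1 - h2
  exact hcne hkey
end
end

section
/- Let 2 < p' < ∞ and 1 < p < 2 with 1/p + 1/p' = 1, and let w_p(ξ) = (1+|ξ₁|^p+|ξ₂|^{p'})^{1/2}. Then there is a constant C, independent of k₀ ∈ ℤ, such that ∫_{3J} w_p(ξ)^{−2} dξ ≤ C for every dyadic square J of side length 2^{k₀} that intersects the complement of the ball of radius 2^{k₀+2} centered at the origin (equivalently, every dyadic square at scale 2^{k₀} not among the squares adjacent to the origin), where 3J is the concentric square of triple side length. -/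
open MeasureTheory Real Complex
open scoped FourierTransform ENNReal

noncomputable section

/-- The dyadic square `[j₁2^k,(j₁+1)2^k) × [j₂2^k,(j₂+1)2^k)`. -/
def dyadicSq (k j₁ j₂ : ℤ) : Set (ℝ × ℝ) :=
  Set.Ico ((j₁ : ℝ) * (2:ℝ) ^ k) (((j₁ : ℝ) + 1) * (2:ℝ) ^ k) ×ˢ
    Set.Ico ((j₂ : ℝ) * (2:ℝ) ^ k) (((j₂ : ℝ) + 1) * (2:ℝ) ^ k)

/-- The concentric square of triple side length. -/
def tripleSq (k j₁ j₂ : ℤ) : Set (ℝ × ℝ) :=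
  Set.Icc (((j₁ : ℝ) - 1) * (2:ℝ) ^ k) (((j₁ : ℝ) + 2) * (2:ℝ) ^ k) ×ˢ
    Set.Icc (((j₂ : ℝ) - 1) * (2:ℝ) ^ k) (((j₂ : ℝ) + 2) * (2:ℝ) ^ k)

section AuxStmt12
open Set

lemma aux1 (r b : ℝ) (hr : 1 < r) (hb : 0 < b) :
    Integrable (fun t : ℝ => (b + |t| ^ r)⁻¹) volume ∧
    ∫ t : ℝ, (b + |t| ^ r)⁻¹ ≤ (2 + 2/(r-1)) * b ^ (1/r - 1) := by
  have hr0 : (0:ℝ) < r := by linarith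
  set c : ℝ := b ^ (1/r) with hc
  have hc0 : 0 < c := rpow_pos_of_pos hb _
  have hcont : Continuous fun t : ℝ => (b + |t| ^ r)⁻¹ := by
    have h1 : Continuous fun t : ℝ => b + |t| ^ r :=
      continuous_const.add (continuous_abs.rpow_const fun x => Or.inr hr0.le)
    exact h1.inv₀ fun x => by positivity
  have int1 : IntegrableOn (fun t : ℝ => (b + |t| ^ r)⁻¹) (Ioc 0 c) := by
    have hcst : IntegrableOn (fun _ : ℝ => b⁻¹) (Ioc 0 c) :=
      integrableOn_const (by rw [Real.volume_Ioc]; exact ENNReal.ofReal_ne_top)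
    refine hcst.mono' hcont.aestronglyMeasurable.restrict ?_
    filter_upwards with x
    rw [Real.norm_eq_abs, abs_of_pos (by positivity)]
    exact inv_anti₀ hb (le_add_of_nonneg_right (rpow_nonneg (abs_nonneg x) r))
  have int2 : IntegrableOn (fun t : ℝ => (b + |t| ^ r)⁻¹) (Ioi c) := by
    refine (integrableOn_Ioi_rpow_of_lt (by linarith : -r < -1) hc0).mono'
      hcont.aestronglyMeasurable.restrict ?_
    filter_upwards [ae_restrict_mem measurableSet_Ioi] with x hx
    have hx0 : 0 < x := hc0.trans hx
    rw [Real.norm_eq_abs, abs_of_pos (by positivity), Real.rpow_neg hx0.le]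
    refine inv_anti₀ (by positivity) ?_
    rw [abs_of_pos hx0]
    linarith [hb.le]
  have intIoi : IntegrableOn (fun t : ℝ => (b + |t| ^ r)⁻¹) (Ioi 0) := by
    rw [← Ioc_union_Ioi_eq_Ioi hc0.le]
    exact int1.union int2
  have intIic : IntegrableOn (fun t : ℝ => (b + |t| ^ r)⁻¹) (Iic 0) := by
    rw [← Measure.map_neg_eq_self (volume : Measure ℝ)]
    have m : MeasurableEmbedding fun x : ℝ => -x := (Homeomorph.neg ℝ).measurableEmbedding
    rw [m.integrableOn_map_iff]
    simp_rw [Function.comp_def, abs_neg, neg_preimage, neg_Iic, neg_zero]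
    exact Iff.mpr integrableOn_Ici_iff_integrableOn_Ioi intIoi
  have hint : Integrable (fun t : ℝ => (b + |t| ^ r)⁻¹) volume := by
    rw [← integrableOn_univ, ← Iic_union_Ioi (a := (0:ℝ))]
    exact intIic.union intIoi
  refine ⟨hint, ?_⟩
  have habs : ∫ t : ℝ, (b + |t| ^ r)⁻¹ = 2 * ∫ x in Ioi (0:ℝ), (b + x ^ r)⁻¹ :=
    integral_comp_abs (f := fun u => (b + u ^ r)⁻¹)
  have eqn : EqOn (fun t : ℝ => (b + |t| ^ r)⁻¹) (fun x : ℝ => (b + x ^ r)⁻¹) (Ioi 0) :=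
    fun x hx => by simp [abs_of_pos (mem_Ioi.mp hx)]
  have int1' : IntegrableOn (fun x : ℝ => (b + x ^ r)⁻¹) (Ioc 0 c) :=
    int1.congr_fun (eqn.mono Ioc_subset_Ioi_self) measurableSet_Ioc
  have int2' : IntegrableOn (fun x : ℝ => (b + x ^ r)⁻¹) (Ioi c) :=
    int2.congr_fun (eqn.mono (Ioi_subset_Ioi hc0.le)) measurableSet_Ioi
  have split : ∫ x in Ioi (0:ℝ), (b + x ^ r)⁻¹ =
      (∫ x in Ioc 0 c, (b + x ^ r)⁻¹) + ∫ x in Ioi c, (b + x ^ r)⁻¹ := by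
    rw [← setIntegral_union (Ioc_disjoint_Ioi le_rfl) measurableSet_Ioi int1' int2',
      Ioc_union_Ioi_eq_Ioi hc0.le]
  have bnd1 : ∫ x in Ioc 0 c, (b + x ^ r)⁻¹ ≤ b ^ (1/r - 1) := by
    have h1 : ∫ x in Ioc 0 c, (b + x ^ r)⁻¹ ≤ ∫ _x in Ioc 0 c, b⁻¹ := by
      refine setIntegral_mono_on int1' (integrableOn_const (by
        rw [Real.volume_Ioc]; exact ENNReal.ofReal_ne_top)) measurableSet_Ioc ?_
      intro x hx
      exact inv_anti₀ hb (le_add_of_nonneg_right (rpow_nonneg (le_of_lt hx.1) r))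
    have h2 : ∫ _x in Ioc 0 c, b⁻¹ = c * b⁻¹ := by
      rw [setIntegral_const, measureReal_def, Real.volume_Ioc, smul_eq_mul, ENNReal.toReal_ofReal (by linarith)]
      ring
    have h3 : c * b⁻¹ = b ^ (1/r - 1) := by
      rw [Real.rpow_sub hb, Real.rpow_one, div_eq_mul_inv]
    linarith
  have bnd2 : ∫ x in Ioi c, (b + x ^ r)⁻¹ ≤ b ^ (1/r - 1) / (r - 1) := by
    have h1 : ∫ x in Ioi c, (b + x ^ r)⁻¹ ≤ ∫ x in Ioi c, x ^ (-r) := by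
      refine setIntegral_mono_on int2' (integrableOn_Ioi_rpow_of_lt (by linarith) hc0)
        measurableSet_Ioi ?_
      intro x hx
      have hx0 : 0 < x := hc0.trans hx
      rw [Real.rpow_neg hx0.le]
      exact inv_anti₀ (by positivity) (by linarith [hb.le])
    have h2 : ∫ x in Ioi c, x ^ (-r) = -c ^ (-r + 1) / (-r + 1) :=
      integral_Ioi_rpow_of_lt (by linarith) hc0
    have h3 : -c ^ (-r + 1) / (-r + 1) = b ^ (1/r - 1) / (r - 1) := by
      have e1 : c ^ (-r + 1) = b ^ (1/r - 1) := by
        rw [hc, ← Real.rpow_mul hb.le]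
        congr 1
        field_simp
        ring
      rw [e1]
      rw [neg_div, ← div_neg]
      ring_nf
    linarith
  rw [habs, split]
  have hbe : (0:ℝ) ≤ b ^ (1/r - 1) := rpow_nonneg hb.le _
  have : 2 * ((b ^ (1/r - 1)) + b ^ (1/r - 1) / (r - 1)) = (2 + 2/(r-1)) * b ^ (1/r - 1) := by
    ring
  nlinarith [bnd1, bnd2]

lemma core (p p' a h A B A' B' : ℝ) (hp0 : 0 < p) (hp'1 : 1 < p')
    (hexp : p * (1/p' - 1) = -1)
    (hh : 0 < h) (hha : h ≤ a) (hAB : B - A ≤ 3*h)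
    (habs : ∀ t ∈ Set.Icc A B, a ≤ |t|) :
    ∫ ξ in Set.Icc A B ×ˢ Set.Icc A' B', (1 + |ξ.1| ^ p + |ξ.2| ^ p')⁻¹
      ≤ 3 * (2 + 2/(p'-1)) := by
  have ha0 : 0 < a := lt_of_lt_of_le hh hha
  set b : ℝ := a ^ p with hb
  have hb0 : 0 < b := rpow_pos_of_pos ha0 _
  obtain ⟨hint1, hbnd1⟩ := aux1 p' b hp'1 hb0
  set K : ℝ := 2 + 2/(p'-1) with hK
  have hK0 : 0 < K := by
    have : 0 < 2/(p'-1) := div_pos two_pos (by linarith)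
    rw [hK]; linarith
  -- b ^ (1/p' - 1) = a⁻¹
  have hbe : b ^ (1/p' - 1) = a⁻¹ := by
    rw [hb, ← Real.rpow_mul ha0.le, hexp, Real.rpow_neg_one]
  -- pointwise bound
  have hpt : ∀ ξ ∈ Set.Icc A B ×ˢ Set.Icc A' B',
      (1 + |ξ.1| ^ p + |ξ.2| ^ p')⁻¹ ≤ (b + |ξ.2| ^ p')⁻¹ := by
    rintro ⟨x, y⟩ ⟨hx, hy⟩
    have h1 : a ≤ |x| := habs x hx
    have h2 : b ≤ |x| ^ p := Real.rpow_le_rpow ha0.le h1 hp0.le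
    refine inv_anti₀ (by positivity) ?_
    have := Real.rpow_nonneg (abs_nonneg y) p'
    linarith
  -- integrability on the compact square
  have hScompact : IsCompact (Set.Icc A B ×ˢ Set.Icc A' B') :=
    isCompact_Icc.prod isCompact_Icc
  have hSmeas : MeasurableSet (Set.Icc A B ×ˢ Set.Icc A' B') :=
    measurableSet_Icc.prod measurableSet_Icc
  have hcont1 : Continuous fun ξ : ℝ × ℝ => (1 + |ξ.1| ^ p + |ξ.2| ^ p')⁻¹ := by
    have c1 : Continuous fun ξ : ℝ × ℝ => 1 + |ξ.1| ^ p + |ξ.2| ^ p' := by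
      apply Continuous.add
      apply Continuous.add continuous_const
      · exact (_root_.continuous_abs.comp continuous_fst).rpow_const fun x => Or.inr hp0.le
      · exact (_root_.continuous_abs.comp continuous_snd).rpow_const fun x => Or.inr (by linarith)
    refine c1.inv₀ fun x => ?_
    have := Real.rpow_nonneg (abs_nonneg x.1) p
    have := Real.rpow_nonneg (abs_nonneg x.2) p'
    positivity
  have hcont2 : Continuous fun ξ : ℝ × ℝ => (b + |ξ.2| ^ p')⁻¹ := by
    have c1 : Continuous fun ξ : ℝ × ℝ => b + |ξ.2| ^ p' :=
      continuous_const.add ((_root_.continuous_abs.comp continuous_snd).rpow_const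
        fun x => Or.inr (by linarith))
    refine c1.inv₀ fun x => ?_
    have := Real.rpow_nonneg (abs_nonneg x.2) p'
    positivity
  have hint2S : IntegrableOn (fun ξ : ℝ × ℝ => (b + |ξ.2| ^ p')⁻¹)
      (Set.Icc A B ×ˢ Set.Icc A' B') := hcont2.continuousOn.integrableOn_compact hScompact
  have hint1S : IntegrableOn (fun ξ : ℝ × ℝ => (1 + |ξ.1| ^ p + |ξ.2| ^ p')⁻¹)
      (Set.Icc A B ×ˢ Set.Icc A' B') := hcont1.continuousOn.integrableOn_compact hScompact
  have step1 : ∫ ξ in Set.Icc A B ×ˢ Set.Icc A' B', (1 + |ξ.1| ^ p + |ξ.2| ^ p')⁻¹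
      ≤ ∫ ξ in Set.Icc A B ×ˢ Set.Icc A' B', (b + |ξ.2| ^ p')⁻¹ :=
    setIntegral_mono_on hint1S hint2S hSmeas hpt
  -- compute product integral
  have hI2 : ∫ y in Set.Icc A' B', (b + |y| ^ p')⁻¹ ≤ K * a⁻¹ := by
    have hle : ∫ y in Set.Icc A' B', (b + |y| ^ p')⁻¹ ≤ ∫ y : ℝ, (b + |y| ^ p')⁻¹ := by
      refine setIntegral_le_integral hint1 ?_
      filter_upwards with y
      have h1 := Real.rpow_nonneg (abs_nonneg y) p'
      positivity
    calc _ ≤ ∫ y : ℝ, (b + |y| ^ p')⁻¹ := hle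
    _ ≤ K * b ^ (1/p' - 1) := hbnd1
    _ = K * a⁻¹ := by rw [hbe]
  have hI2nonneg : 0 ≤ ∫ y in Set.Icc A' B', (b + |y| ^ p')⁻¹ := by
    refine integral_nonneg fun y => ?_
    have h1 := Real.rpow_nonneg (abs_nonneg y) p'
    positivity
  have step2 : ∫ ξ in Set.Icc A B ×ˢ Set.Icc A' B', (b + |ξ.2| ^ p')⁻¹
      = (volume (Set.Icc A B)).toReal * ∫ y in Set.Icc A' B', (b + |y| ^ p')⁻¹ := by
    rw [Measure.volume_eq_prod] at hint2S ⊢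
    rw [setIntegral_prod _ hint2S]
    simp [setIntegral_const, smul_eq_mul]
    exact Or.inl ENNReal.toReal_ofReal'.symm
  have hvol : (volume (Set.Icc A B)).toReal ≤ 3 * h := by
    rw [Real.volume_Icc]
    rcases le_or_gt A B with hAB' | hAB'
    · rw [ENNReal.toReal_ofReal (by linarith)]; linarith
    · rw [ENNReal.ofReal_of_nonpos (by linarith)]; simpa using by linarith
  calc ∫ ξ in Set.Icc A B ×ˢ Set.Icc A' B', (1 + |ξ.1| ^ p + |ξ.2| ^ p')⁻¹
      ≤ (volume (Set.Icc A B)).toReal * ∫ y in Set.Icc A' B', (b + |y| ^ p')⁻¹ := by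
        rw [← step2]; exact step1
    _ ≤ (3 * h) * (K * a⁻¹) :=
        mul_le_mul hvol hI2 hI2nonneg (by linarith)
    _ ≤ (3 * h) * (K * h⁻¹) := by
        have : a⁻¹ ≤ h⁻¹ := inv_anti₀ hh hha
        have h1 : K * a⁻¹ ≤ K * h⁻¹ := mul_le_mul_of_nonneg_left this hK0.le
        nlinarith
    _ = 3 * K := by
        field_simp

lemma core' (p p' a h A B A' B' : ℝ) (hp1 : 1 < p) (hp'0 : 0 < p')
    (hexp : p' * (1/p - 1) = -1)
    (hh : 0 < h) (hha : h ≤ a) (hAB : B' - A' ≤ 3*h)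
    (habs : ∀ t ∈ Set.Icc A' B', a ≤ |t|) :
    ∫ ξ in Set.Icc A B ×ˢ Set.Icc A' B', (1 + |ξ.1| ^ p + |ξ.2| ^ p')⁻¹
      ≤ 3 * (2 + 2/(p-1)) := by
  have ha0 : 0 < a := lt_of_lt_of_le hh hha
  have hp0 : (0:ℝ) < p := by linarith
  set b : ℝ := a ^ p' with hb
  have hb0 : 0 < b := rpow_pos_of_pos ha0 _
  obtain ⟨hint1, hbnd1⟩ := aux1 p b hp1 hb0
  set K : ℝ := 2 + 2/(p-1) with hK
  have hK0 : 0 < K := by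
    have : 0 < 2/(p-1) := div_pos two_pos (by linarith)
    rw [hK]; linarith
  have hbe : b ^ (1/p - 1) = a⁻¹ := by
    rw [hb, ← Real.rpow_mul ha0.le, hexp, Real.rpow_neg_one]
  have hpt : ∀ ξ ∈ Set.Icc A B ×ˢ Set.Icc A' B',
      (1 + |ξ.1| ^ p + |ξ.2| ^ p')⁻¹ ≤ (b + |ξ.1| ^ p)⁻¹ := by
    rintro ⟨x, y⟩ ⟨hx, hy⟩
    have h1 : a ≤ |y| := habs y hy
    have h2 : b ≤ |y| ^ p' := Real.rpow_le_rpow ha0.le h1 hp'0.le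
    refine inv_anti₀ (by positivity) ?_
    have := Real.rpow_nonneg (abs_nonneg x) p
    linarith
  have hScompact : IsCompact (Set.Icc A B ×ˢ Set.Icc A' B') :=
    isCompact_Icc.prod isCompact_Icc
  have hSmeas : MeasurableSet (Set.Icc A B ×ˢ Set.Icc A' B') :=
    measurableSet_Icc.prod measurableSet_Icc
  have hcont1 : Continuous fun ξ : ℝ × ℝ => (1 + |ξ.1| ^ p + |ξ.2| ^ p')⁻¹ := by
    have c1 : Continuous fun ξ : ℝ × ℝ => 1 + |ξ.1| ^ p + |ξ.2| ^ p' := by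
      apply Continuous.add
      apply Continuous.add continuous_const
      · exact (_root_.continuous_abs.comp continuous_fst).rpow_const fun x => Or.inr hp0.le
      · exact (_root_.continuous_abs.comp continuous_snd).rpow_const fun x => Or.inr (by linarith)
    refine c1.inv₀ fun x => ?_
    have := Real.rpow_nonneg (abs_nonneg x.1) p
    have := Real.rpow_nonneg (abs_nonneg x.2) p'
    positivity
  have hcont2 : Continuous fun ξ : ℝ × ℝ => (b + |ξ.1| ^ p)⁻¹ := by
    have c1 : Continuous fun ξ : ℝ × ℝ => b + |ξ.1| ^ p :=
      continuous_const.add ((_root_.continuous_abs.comp continuous_fst).rpow_const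
        fun x => Or.inr hp0.le)
    refine c1.inv₀ fun x => ?_
    have := Real.rpow_nonneg (abs_nonneg x.1) p
    positivity
  have hint2S : IntegrableOn (fun ξ : ℝ × ℝ => (b + |ξ.1| ^ p)⁻¹)
      (Set.Icc A B ×ˢ Set.Icc A' B') := hcont2.continuousOn.integrableOn_compact hScompact
  have hint1S : IntegrableOn (fun ξ : ℝ × ℝ => (1 + |ξ.1| ^ p + |ξ.2| ^ p')⁻¹)
      (Set.Icc A B ×ˢ Set.Icc A' B') := hcont1.continuousOn.integrableOn_compact hScompact
  have step1 : ∫ ξ in Set.Icc A B ×ˢ Set.Icc A' B', (1 + |ξ.1| ^ p + |ξ.2| ^ p')⁻¹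
      ≤ ∫ ξ in Set.Icc A B ×ˢ Set.Icc A' B', (b + |ξ.1| ^ p)⁻¹ :=
    setIntegral_mono_on hint1S hint2S hSmeas hpt
  have hI2 : ∫ x in Set.Icc A B, (b + |x| ^ p)⁻¹ ≤ K * a⁻¹ := by
    have hle : ∫ x in Set.Icc A B, (b + |x| ^ p)⁻¹ ≤ ∫ x : ℝ, (b + |x| ^ p)⁻¹ := by
      refine setIntegral_le_integral hint1 ?_
      filter_upwards with y
      have h1 := Real.rpow_nonneg (abs_nonneg y) p
      positivity
    calc _ ≤ ∫ x : ℝ, (b + |x| ^ p)⁻¹ := hle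
    _ ≤ K * b ^ (1/p - 1) := hbnd1
    _ = K * a⁻¹ := by rw [hbe]
  have hI2nonneg : 0 ≤ ∫ x in Set.Icc A B, (b + |x| ^ p)⁻¹ := by
    refine integral_nonneg fun y => ?_
    have h1 := Real.rpow_nonneg (abs_nonneg y) p
    positivity
  have step2 : ∫ ξ in Set.Icc A B ×ˢ Set.Icc A' B', (b + |ξ.1| ^ p)⁻¹
      = (volume (Set.Icc A' B')).toReal * ∫ x in Set.Icc A B, (b + |x| ^ p)⁻¹ := by
    rw [Measure.volume_eq_prod] at hint2S ⊢
    rw [setIntegral_prod _ hint2S]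
    simp only [setIntegral_const, smul_eq_mul, measureReal_def]
    rw [← integral_const_mul]
  have hvol : (volume (Set.Icc A' B')).toReal ≤ 3 * h := by
    rw [Real.volume_Icc]
    rcases le_or_gt A' B' with hAB' | hAB'
    · rw [ENNReal.toReal_ofReal (by linarith)]; linarith
    · rw [ENNReal.ofReal_of_nonpos (by linarith)]; simpa using by linarith
  calc ∫ ξ in Set.Icc A B ×ˢ Set.Icc A' B', (1 + |ξ.1| ^ p + |ξ.2| ^ p')⁻¹
      ≤ (volume (Set.Icc A' B')).toReal * ∫ x in Set.Icc A B, (b + |x| ^ p)⁻¹ := by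
        rw [← step2]; exact step1
    _ ≤ (3 * h) * (K * a⁻¹) :=
        mul_le_mul hvol hI2 hI2nonneg (by linarith)
    _ ≤ (3 * h) * (K * h⁻¹) := by
        have : a⁻¹ ≤ h⁻¹ := inv_anti₀ hh hha
        have h1 : K * a⁻¹ ≤ K * h⁻¹ := mul_le_mul_of_nonneg_left this hK0.le
        nlinarith
    _ = 3 * K := by
        field_simp

end AuxStmt12

set_option maxHeartbeats 2000000 in
/-- uniform bound `∫_{3J} w_p(ξ)^{-2} dξ ≤ C` over all admissible
dyadic squares `J` at scale `2^{k₀}`, i.e. those meeting the complement of the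
ball of radius `2^{k₀+2}` about the origin, with `C` independent of `k₀`. -/
theorem stmt12 (p p' : ℝ) (hp1 : 1 < p) (hp2 : p < 2) (hp' : 2 < p')
    (hconj : 1 / p + 1 / p' = 1) :
    ∃ C : ℝ, ∀ k₀ j₁ j₂ : ℤ,
      (∃ ξ : ℝ × ℝ, ξ ∈ dyadicSq k₀ j₁ j₂ ∧
        (2:ℝ) ^ (k₀ + 2) ≤ Real.sqrt (ξ.1 ^ 2 + ξ.2 ^ 2)) →
      ∫ ξ in tripleSq k₀ j₁ j₂, (1 + |ξ.1| ^ p + |ξ.2| ^ p')⁻¹ ≤ C := by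
  have hp0 : (0:ℝ) < p := by linarith
  have hp'0 : (0:ℝ) < p' := by linarith
  have hp'1 : (1:ℝ) < p' := by linarith
  have hpp : p + p' = p * p' := by
    field_simp at hconj; linarith
  have hexp1 : p * (1/p' - 1) = -1 := by
    field_simp
    nlinarith
  have hexp2 : p' * (1/p - 1) = -1 := by
    field_simp
    nlinarith
  set K1 : ℝ := 3 * (2 + 2/(p'-1)) with hK1
  set K2 : ℝ := 3 * (2 + 2/(p-1)) with hK2
  have hK1pos : 0 < K1 := by
    have : 0 < 2/(p'-1) := div_pos two_pos (by linarith)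
    rw [hK1]; linarith
  have hK2pos : 0 < K2 := by
    have : 0 < 2/(p-1) := div_pos two_pos (by linarith)
    rw [hK2]; linarith
  refine ⟨K1 + K2, ?_⟩
  rintro k₀ j₁ j₂ ⟨ξ, ⟨hξ1, hξ2⟩, hnorm⟩
  obtain ⟨t, ht, ht0⟩ : ∃ t : ℝ, (2:ℝ) ^ k₀ = t ∧ 0 < t :=
    ⟨_, rfl, zpow_pos (by norm_num) _⟩
  rw [ht] at hξ1 hξ2
  -- admissibility forces one index to be large
  have hkey : (2:ℤ) ≤ j₁ ∨ j₁ ≤ -3 ∨ (2:ℤ) ≤ j₂ ∨ j₂ ≤ -3 := by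
    by_contra hcon
    push_neg at hcon
    obtain ⟨h1, h2, h3, h4⟩ := hcon
    have hj1a : ((j₁:ℝ)) ≤ 1 := by exact_mod_cast (by omega : j₁ ≤ 1)
    have hj1b : (-2:ℝ) ≤ (j₁:ℝ) := by exact_mod_cast (by omega : (-2:ℤ) ≤ j₁)
    have hj2a : ((j₂:ℝ)) ≤ 1 := by exact_mod_cast (by omega : j₂ ≤ 1)
    have hj2b : (-2:ℝ) ≤ (j₂:ℝ) := by exact_mod_cast (by omega : (-2:ℤ) ≤ j₂)
    simp only [Set.mem_Ico] at hξ1 hξ2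
    have hx1 : -2 * t ≤ ξ.1 := le_trans (by nlinarith) hξ1.1
    have hx2 : ξ.1 ≤ 2 * t := le_trans hξ1.2.le (by nlinarith)
    have hy1 : -2 * t ≤ ξ.2 := le_trans (by nlinarith) hξ2.1
    have hy2 : ξ.2 ≤ 2 * t := le_trans hξ2.2.le (by nlinarith)
    have hsq : ((2:ℝ) ^ (k₀ + 2)) ^ 2 ≤ ξ.1 ^ 2 + ξ.2 ^ 2 :=
      (Real.le_sqrt (by positivity) (by positivity)).mp hnorm
    have h4t : (2:ℝ) ^ (k₀ + 2) = 4 * t := by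
      rw [zpow_add₀ (by norm_num : (2:ℝ) ≠ 0) k₀ 2, ht]
      norm_num [mul_comm]
    rw [h4t] at hsq
    nlinarith [mul_nonneg (by linarith : (0:ℝ) ≤ 2*t - ξ.1) (by linarith : (0:ℝ) ≤ 2*t + ξ.1),
      mul_nonneg (by linarith : (0:ℝ) ≤ 2*t - ξ.2) (by linarith : (0:ℝ) ≤ 2*t + ξ.2),
      mul_pos ht0 ht0]
  have hmem : tripleSq k₀ j₁ j₂ =
      Set.Icc (((j₁ : ℝ) - 1) * t) (((j₁ : ℝ) + 2) * t) ×ˢ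
        Set.Icc (((j₂ : ℝ) - 1) * t) (((j₂ : ℝ) + 2) * t) := by
    rw [tripleSq, ht]
  rw [hmem]
  rcases hkey with hc | hc | hc | hc
  · have hj : (2:ℝ) ≤ (j₁:ℝ) := by exact_mod_cast hc
    have := core p p' t t (((j₁:ℝ)-1)*t) (((j₁:ℝ)+2)*t) (((j₂:ℝ)-1)*t) (((j₂:ℝ)+2)*t)
      hp0 hp'1 hexp1 ht0 le_rfl (by nlinarith)
      (fun s hs => by
        have h1 : t ≤ s := by nlinarith [hs.1, mul_nonneg (by linarith : (0:ℝ) ≤ (j₁:ℝ)-2) ht0.le]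
        exact le_trans h1 (le_abs_self s))
    linarith
  · have hj : (j₁:ℝ) ≤ -3 := by exact_mod_cast hc
    have := core p p' t t (((j₁:ℝ)-1)*t) (((j₁:ℝ)+2)*t) (((j₂:ℝ)-1)*t) (((j₂:ℝ)+2)*t)
      hp0 hp'1 hexp1 ht0 le_rfl (by nlinarith)
      (fun s hs => by
        have h1 : s ≤ -t := by nlinarith [hs.2, mul_nonneg (by linarith : (0:ℝ) ≤ -(j₁:ℝ)-3) ht0.le]
        have h2 : t ≤ -s := by linarith
        exact le_trans h2 (neg_le_abs s))
    linarith
  · have hj : (2:ℝ) ≤ (j₂:ℝ) := by exact_mod_cast hc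
    have := core' p p' t t (((j₁:ℝ)-1)*t) (((j₁:ℝ)+2)*t) (((j₂:ℝ)-1)*t) (((j₂:ℝ)+2)*t)
      hp1 hp'0 hexp2 ht0 le_rfl (by nlinarith)
      (fun s hs => by
        have h1 : t ≤ s := by nlinarith [hs.1, mul_nonneg (by linarith : (0:ℝ) ≤ (j₂:ℝ)-2) ht0.le]
        exact le_trans h1 (le_abs_self s))
    linarith
  · have hj : (j₂:ℝ) ≤ -3 := by exact_mod_cast hc
    have := core' p p' t t (((j₁:ℝ)-1)*t) (((j₁:ℝ)+2)*t) (((j₂:ℝ)-1)*t) (((j₂:ℝ)+2)*t)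
      hp1 hp'0 hexp2 ht0 le_rfl (by nlinarith)
      (fun s hs => by
        have h1 : s ≤ -t := by nlinarith [hs.2, mul_nonneg (by linarith : (0:ℝ) ≤ -(j₂:ℝ)-3) ht0.le]
        have h2 : t ≤ -s := by linarith
        exact le_trans h2 (neg_le_abs s))
    linarith
end
end

section
/- If g, h ∈ VMO(ℝ) ∩ L^∞(ℝ), then the tensor product (g ⊗ h)(x,y) = g(x)h(y) lies in VMO(ℝ²). -/
open MeasureTheory Real Complex
open scoped FourierTransform ENNReal

noncomputable section

/-- Mean oscillation of `f : ℝ → ℂ` over the interval `[c−r, c+r]`. -/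
def osc1 (f : ℝ → ℂ) (c r : ℝ) : ℝ :=
  ⨍ x in Set.Icc (c - r) (c + r), ‖f x - ⨍ y in Set.Icc (c - r) (c + r), f y‖

/-- `f ∈ VMO(ℝ)`. -/
def IsVMO1 (f : ℝ → ℂ) : Prop :=
  LocallyIntegrable f volume ∧
  (∃ C : ℝ, ∀ c r, 0 < r → osc1 f c r ≤ C) ∧
  ∀ δ > (0:ℝ), ∃ a > (0:ℝ), ∀ c r, 0 < r → r ≤ a → osc1 f c r ≤ δ


/-! ### Auxiliary lemmas -/

section Aux

variable {α : Type*} {mα : MeasurableSpace α} {μ : Measure α}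

lemma myAverage_mono [IsFiniteMeasure μ] {f g : α → ℝ} (hf : Integrable f μ)
    (hg : Integrable g μ) (h : ∀ᵐ x ∂μ, f x ≤ g x) : ⨍ x, f x ∂μ ≤ ⨍ x, g x ∂μ := by
  rw [average_eq, average_eq, smul_eq_mul, smul_eq_mul]
  exact mul_le_mul_of_nonneg_left (integral_mono_ae hf hg h)
    (inv_nonneg.2 ENNReal.toReal_nonneg)

lemma myAverage_le_const [IsFiniteMeasure μ] {f : α → ℝ} {M : ℝ} (hM : 0 ≤ M)
    (hf : Integrable f μ) (h : ∀ᵐ x ∂μ, f x ≤ M) : ⨍ x, f x ∂μ ≤ M := by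
  rcases eq_or_ne μ 0 with h0 | h0
  · simpa [average_eq, h0] using hM
  · have : NeZero μ := ⟨h0⟩
    calc ⨍ x, f x ∂μ ≤ ⨍ _, M ∂μ := myAverage_mono hf (integrable_const M) h
      _ = M := average_const μ M

lemma myNorm_average_le [IsFiniteMeasure μ] (f : α → ℂ) :
    ‖⨍ x, f x ∂μ‖ ≤ ⨍ x, ‖f x‖ ∂μ := by
  rw [average_eq, average_eq, norm_smul, smul_eq_mul, norm_inv, Real.norm_eq_abs,
    _root_.abs_of_nonneg measureReal_nonneg]
  exact mul_le_mul_of_nonneg_left (norm_integral_le_integral_norm f)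
    (inv_nonneg.2 ENNReal.toReal_nonneg)

lemma myAverage_add_mul [IsFiniteMeasure μ] {u v : α → ℝ} (hu : Integrable u μ)
    (hv : Integrable v μ) (A B : ℝ) :
    ⨍ x, (A * u x + B * v x) ∂μ = A * ⨍ x, u x ∂μ + B * ⨍ x, v x ∂μ := by
  rw [average_eq, average_eq, average_eq, integral_add (hu.const_mul A) (hv.const_mul B),
    integral_const_mul, integral_const_mul, smul_eq_mul, smul_eq_mul, smul_eq_mul]
  ring

lemma avg_osc_le [IsFiniteMeasure μ] {f : α → ℂ} (hf : Integrable f μ) (k : ℂ) :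
    ⨍ x, ‖f x - ⨍ y, f y ∂μ‖ ∂μ ≤ 2 * ⨍ x, ‖f x - k‖ ∂μ := by
  rcases eq_or_ne μ 0 with h0 | h0
  · simp [average_eq, h0]
  have : NeZero μ := ⟨h0⟩
  have hinv : (μ Set.univ)⁻¹ ≠ ∞ :=
    ENNReal.inv_ne_top.2 (MeasureTheory.Measure.measure_univ_ne_zero.2 h0)
  set m := ⨍ y, f y ∂μ with hm
  have hint : Integrable (fun x => ‖f x - k‖) μ := (hf.sub (integrable_const k)).norm
  have hmk : ‖m - k‖ ≤ ⨍ x, ‖f x - k‖ ∂μ := by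
    have h1 : ⨍ x, (f x - k) ∂μ = m - k := by
      have h2 : ⨍ x, (f x - k) ∂μ = (⨍ x, f x ∂μ) - ⨍ _, k ∂μ := by
        rw [average_eq', average_eq', average_eq',
          integral_sub (hf.smul_measure hinv) ((integrable_const k).smul_measure hinv)]
      rw [h2, average_const, ← hm]
    calc ‖m - k‖ = ‖⨍ x, (f x - k) ∂μ‖ := by rw [h1]
      _ ≤ ⨍ x, ‖f x - k‖ ∂μ := myNorm_average_le _
  calc ⨍ x, ‖f x - m‖ ∂μ
      ≤ ⨍ x, (‖f x - k‖ + ‖m - k‖) ∂μ := by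
        refine myAverage_mono ((hf.sub (integrable_const m)).norm)
          (hint.add (integrable_const _)) (Filter.Eventually.of_forall fun x => ?_)
        calc ‖f x - m‖ = ‖(f x - k) + (k - m)‖ := by congr 1; ring
          _ ≤ ‖f x - k‖ + ‖k - m‖ := norm_add_le _ _
          _ = ‖f x - k‖ + ‖m - k‖ := by rw [norm_sub_rev k m]
    _ = (⨍ x, ‖f x - k‖ ∂μ) + ‖m - k‖ := by
        have h3 : ⨍ x, (‖f x - k‖ + ‖m - k‖) ∂μ
            = (⨍ x, ‖f x - k‖ ∂μ) + ⨍ _, ‖m - k‖ ∂μ := by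
          rw [average_eq', average_eq', average_eq',
            integral_add (hint.smul_measure hinv) ((integrable_const _).smul_measure hinv)]
        rw [h3, average_const]
    _ ≤ (⨍ x, ‖f x - k‖ ∂μ) + ⨍ x, ‖f x - k‖ ∂μ := by linarith
    _ = 2 * ⨍ x, ‖f x - k‖ ∂μ := by ring

end Aux

lemma osc2_tensor (g h : ℝ → ℂ) (hgm : AEStronglyMeasurable g volume)
    (hhm : AEStronglyMeasurable h volume) {Mg Mh : ℝ}
    (hMg0 : 0 ≤ Mg) (hMh0 : 0 ≤ Mh)
    (hMg : ∀ᵐ x ∂(volume : Measure ℝ), ‖g x‖ ≤ Mg)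
    (hMh : ∀ᵐ y ∂(volume : Measure ℝ), ‖h y‖ ≤ Mh)
    (c : ℝ × ℝ) (r : ℝ) (hr : 0 < r) :
    osc2 (fun p : ℝ × ℝ => g p.1 * h p.2) c r ≤
      2 * (Mh * osc1 g c.1 r + Mg * osc1 h c.2 r) := by
  set I := Set.Icc (c.1 - r) (c.1 + r) with hIdef
  set J := Set.Icc (c.2 - r) (c.2 + r) with hJdef
  have hIvol : volume I = ENNReal.ofReal (2 * r) := by
    rw [hIdef, Real.volume_Icc]; congr 1; ring
  have hJvol : volume J = ENNReal.ofReal (2 * r) := by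
    rw [hJdef, Real.volume_Icc]; congr 1; ring
  haveI hfinI : IsFiniteMeasure (volume.restrict I) :=
    ⟨by rw [Measure.restrict_apply_univ, hIvol]; exact ENNReal.ofReal_lt_top⟩
  haveI hfinJ : IsFiniteMeasure (volume.restrict J) :=
    ⟨by rw [Measure.restrict_apply_univ, hJvol]; exact ENNReal.ofReal_lt_top⟩
  have hprod : (volume : Measure (ℝ × ℝ)).restrict (cube2 c r)
      = (volume.restrict I).prod (volume.restrict J) := by
    rw [cube2, Measure.volume_eq_prod, ← Measure.prod_restrict]
  haveI hfinQ : IsFiniteMeasure ((volume : Measure (ℝ × ℝ)).restrict (cube2 c r)) := by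
    rw [hprod]; infer_instance
  set a := ⨍ x in I, g x with hadef
  set b := ⨍ y in J, h y with hbdef
  have hgI : Integrable g (volume.restrict I) :=
    ⟨hgm.restrict, HasFiniteIntegral.of_bounded (ae_restrict_of_ae hMg)⟩
  have hhJ : Integrable h (volume.restrict J) :=
    ⟨hhm.restrict, HasFiniteIntegral.of_bounded (ae_restrict_of_ae hMh)⟩
  have haMg : ‖a‖ ≤ Mg :=
    le_trans (myNorm_average_le g)
      (myAverage_le_const hMg0 hgI.norm (ae_restrict_of_ae hMg))
  have hbMh : ‖b‖ ≤ Mh :=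
    le_trans (myNorm_average_le h)
      (myAverage_le_const hMh0 hhJ.norm (ae_restrict_of_ae hMh))
  -- measurability and bounds on the product
  have hgm2 : AEStronglyMeasurable (fun p : ℝ × ℝ => g p.1)
      ((volume.restrict I).prod (volume.restrict J)) :=
    hgm.restrict.comp_quasiMeasurePreserving Measure.quasiMeasurePreserving_fst
  have hhm2 : AEStronglyMeasurable (fun p : ℝ × ℝ => h p.2)
      ((volume.restrict I).prod (volume.restrict J)) :=
    hhm.restrict.comp_quasiMeasurePreserving Measure.quasiMeasurePreserving_snd
  have hb1 : ∀ᵐ p ∂((volume.restrict I).prod (volume.restrict J)), ‖g p.1‖ ≤ Mg :=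
    Measure.quasiMeasurePreserving_fst.ae (ae_restrict_of_ae hMg)
  have hb2 : ∀ᵐ p ∂((volume.restrict I).prod (volume.restrict J)), ‖h p.2‖ ≤ Mh :=
    Measure.quasiMeasurePreserving_snd.ae (ae_restrict_of_ae hMh)
  have hgint2 : Integrable (fun p : ℝ × ℝ => g p.1)
      ((volume.restrict I).prod (volume.restrict J)) :=
    ⟨hgm2, HasFiniteIntegral.of_bounded hb1⟩
  have hhint2 : Integrable (fun p : ℝ × ℝ => h p.2)
      ((volume.restrict I).prod (volume.restrict J)) :=
    ⟨hhm2, HasFiniteIntegral.of_bounded hb2⟩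
  have hfint : Integrable (fun p : ℝ × ℝ => g p.1 * h p.2)
      ((volume : Measure (ℝ × ℝ)).restrict (cube2 c r)) := by
    rw [hprod]
    refine ⟨hgm2.mul hhm2, HasFiniteIntegral.of_bounded (C := Mg * Mh) ?_⟩
    filter_upwards [hb1, hb2] with p h1 h2
    calc ‖g p.1 * h p.2‖ = ‖g p.1‖ * ‖h p.2‖ := norm_mul _ _
      _ ≤ Mg * Mh := mul_le_mul h1 h2 (norm_nonneg _) hMg0
  have hu : Integrable (fun p : ℝ × ℝ => ‖g p.1 - a‖)
      ((volume.restrict I).prod (volume.restrict J)) :=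
    (hgint2.sub (integrable_const a)).norm
  have hv : Integrable (fun p : ℝ × ℝ => ‖h p.2 - b‖)
      ((volume.restrict I).prod (volume.restrict J)) :=
    (hhint2.sub (integrable_const b)).norm
  -- measures of the factors
  have htI : ((volume.restrict I) Set.univ).toReal = 2 * r := by
    rw [Measure.restrict_apply_univ, hIvol, ENNReal.toReal_ofReal (by positivity)]
  have htJ : ((volume.restrict J) Set.univ).toReal = 2 * r := by
    rw [Measure.restrict_apply_univ, hJvol, ENNReal.toReal_ofReal (by positivity)]
  have htQ : (((volume.restrict I).prod (volume.restrict J)) Set.univ).toReal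
      = (2 * r) * (2 * r) := by
    rw [← Set.univ_prod_univ, Measure.prod_prod, ENNReal.toReal_mul, htI, htJ]
  have hrne : (2 * r) ≠ 0 := by positivity
  -- Step C: the averages of the factors over the square are the 1D averages
  have stepC : (⨍ p in cube2 c r, ‖g p.1 - a‖) = ⨍ x in I, ‖g x - a‖ := by
    rw [hprod, average_eq, average_eq]
    have h1 : (∫ p, ‖g p.1 - a‖ ∂((volume.restrict I).prod (volume.restrict J)))
        = (∫ x, ‖g x - a‖ ∂(volume.restrict I)) * ∫ _, (1 : ℝ) ∂(volume.restrict J) := by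
      rw [← integral_prod_mul (f := fun x => ‖g x - a‖) (g := fun _ => (1 : ℝ))]
      simp
    rw [h1, integral_const]
    simp only [smul_eq_mul]
    simp only [measureReal_def]
    rw [htQ, htJ, htI]
    field_simp
  have stepD : (⨍ p in cube2 c r, ‖h p.2 - b‖) = ⨍ y in J, ‖h y - b‖ := by
    rw [hprod, average_eq, average_eq]
    have h1 : (∫ p, ‖h p.2 - b‖ ∂((volume.restrict I).prod (volume.restrict J)))
        = (∫ _, (1 : ℝ) ∂(volume.restrict I)) * ∫ y, ‖h y - b‖ ∂(volume.restrict J) := by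
      rw [← integral_prod_mul (f := fun _ => (1 : ℝ)) (g := fun y => ‖h y - b‖)]
      simp
    rw [h1, integral_const]
    simp only [smul_eq_mul]
    simp only [measureReal_def]
    rw [htQ, htJ, htI]
    field_simp
  have hosc1g : osc1 g c.1 r = ⨍ x in I, ‖g x - a‖ := by
    rw [osc1, ← hIdef, ← hadef]
  have hosc1h : osc1 h c.2 r = ⨍ y in J, ‖h y - b‖ := by
    rw [osc1, ← hJdef, ← hbdef]
  -- Step B
  have stepB : (⨍ p in cube2 c r, ‖g p.1 * h p.2 - a * b‖)
      ≤ Mh * (⨍ p in cube2 c r, ‖g p.1 - a‖) + Mg * ⨍ p in cube2 c r, ‖h p.2 - b‖ := by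
    rw [hprod]
    calc (⨍ p, ‖g p.1 * h p.2 - a * b‖ ∂((volume.restrict I).prod (volume.restrict J)))
        ≤ ⨍ p, (Mh * ‖g p.1 - a‖ + Mg * ‖h p.2 - b‖)
            ∂((volume.restrict I).prod (volume.restrict J)) := by
          refine myAverage_mono ?_ ((hu.const_mul Mh).add (hv.const_mul Mg)) ?_
          · rw [← hprod]; exact (hfint.sub (integrable_const (a * b))).norm
          · filter_upwards [hb2] with p hp
            calc ‖g p.1 * h p.2 - a * b‖
                = ‖(g p.1 - a) * h p.2 + a * (h p.2 - b)‖ := by congr 1; ring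
              _ ≤ ‖(g p.1 - a) * h p.2‖ + ‖a * (h p.2 - b)‖ := norm_add_le _ _
              _ = ‖g p.1 - a‖ * ‖h p.2‖ + ‖a‖ * ‖h p.2 - b‖ := by
                  rw [norm_mul, norm_mul]
              _ ≤ Mh * ‖g p.1 - a‖ + Mg * ‖h p.2 - b‖ := by
                  have e1 : ‖g p.1 - a‖ * ‖h p.2‖ ≤ ‖g p.1 - a‖ * Mh :=
                    mul_le_mul_of_nonneg_left hp (norm_nonneg _)
                  have e2 : ‖a‖ * ‖h p.2 - b‖ ≤ Mg * ‖h p.2 - b‖ :=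
                    mul_le_mul_of_nonneg_right haMg (norm_nonneg _)
                  nlinarith [norm_nonneg (g p.1 - a), norm_nonneg (h p.2 - b)]
      _ = Mh * (⨍ p, ‖g p.1 - a‖ ∂((volume.restrict I).prod (volume.restrict J)))
            + Mg * ⨍ p, ‖h p.2 - b‖ ∂((volume.restrict I).prod (volume.restrict J)) :=
          myAverage_add_mul hu hv Mh Mg
  -- conclude
  calc osc2 (fun p : ℝ × ℝ => g p.1 * h p.2) c r
      ≤ 2 * ⨍ p in cube2 c r, ‖g p.1 * h p.2 - a * b‖ := by
        rw [osc2]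
        -- identify the average over the square with a*b is not needed:
        exact avg_osc_le hfint (a * b)
    _ ≤ 2 * (Mh * (⨍ p in cube2 c r, ‖g p.1 - a‖)
          + Mg * ⨍ p in cube2 c r, ‖h p.2 - b‖) := by linarith
    _ = 2 * (Mh * osc1 g c.1 r + Mg * osc1 h c.2 r) := by
        rw [stepC, stepD, hosc1g, hosc1h]

/-- if `g, h ∈ VMO(ℝ) ∩ L^∞(ℝ)` then `g ⊗ h ∈ VMO(ℝ²)`. -/
theorem stmt14 (g h : ℝ → ℂ) (hg : IsVMO1 g) (hh : IsVMO1 h)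
    (hgb : MemLp g ⊤ volume) (hhb : MemLp h ⊤ volume) :
    IsVMO2 (fun p : ℝ × ℝ => g p.1 * h p.2) := by
  obtain ⟨hgl, ⟨Cg, hCg⟩, hgv⟩ := hg
  obtain ⟨hhl, ⟨Ch, hCh⟩, hhv⟩ := hh
  have hgm : AEStronglyMeasurable g volume := hgb.1
  have hhm : AEStronglyMeasurable h volume := hhb.1
  set Mg := (eLpNormEssSup g volume).toReal with hMgdef
  set Mh := (eLpNormEssSup h volume).toReal with hMhdef
  have hMg0 : 0 ≤ Mg := ENNReal.toReal_nonneg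
  have hMh0 : 0 ≤ Mh := ENNReal.toReal_nonneg
  have hgS : eLpNormEssSup g volume ≠ ⊤ := by
    have h2 := hgb.2; rw [eLpNorm_exponent_top] at h2; exact h2.ne
  have hhS : eLpNormEssSup h volume ≠ ⊤ := by
    have h2 := hhb.2; rw [eLpNorm_exponent_top] at h2; exact h2.ne
  have hMgb : ∀ᵐ x ∂(volume : Measure ℝ), ‖g x‖ ≤ Mg := by
    filter_upwards [ae_le_eLpNormEssSup (f := g) (μ := volume)] with x hx
    calc ‖g x‖ = ((‖g x‖₊ : ℝ≥0∞)).toReal := by simp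
      _ ≤ Mg := ENNReal.toReal_mono hgS hx
  have hMhb : ∀ᵐ y ∂(volume : Measure ℝ), ‖h y‖ ≤ Mh := by
    filter_upwards [ae_le_eLpNormEssSup (f := h) (μ := volume)] with y hy
    calc ‖h y‖ = ((‖h y‖₊ : ℝ≥0∞)).toReal := by simp
      _ ≤ Mh := ENNReal.toReal_mono hhS hy
  have key : ∀ c r, 0 < r → osc2 (fun p : ℝ × ℝ => g p.1 * h p.2) c r ≤
      2 * (Mh * osc1 g c.1 r + Mg * osc1 h c.2 r) :=
    fun c r hr => osc2_tensor g h hgm hhm hMg0 hMh0 hMgb hMhb c r hr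
  have hfmem : MemLp (fun p : ℝ × ℝ => g p.1 * h p.2) ⊤ (volume : Measure (ℝ × ℝ)) := by
    refine memLp_top_of_bound ?_ (Mg * Mh) ?_
    · rw [Measure.volume_eq_prod]
      exact (hgm.comp_quasiMeasurePreserving Measure.quasiMeasurePreserving_fst).mul
        (hhm.comp_quasiMeasurePreserving Measure.quasiMeasurePreserving_snd)
    · rw [Measure.volume_eq_prod]
      filter_upwards [Measure.quasiMeasurePreserving_fst.ae hMgb,
        Measure.quasiMeasurePreserving_snd.ae hMhb] with p h1 h2
      calc ‖g p.1 * h p.2‖ = ‖g p.1‖ * ‖h p.2‖ := norm_mul _ _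
        _ ≤ Mg * Mh := mul_le_mul h1 h2 (norm_nonneg _) hMg0
  refine ⟨hfmem.locallyIntegrable le_top, ⟨2 * (Mh * Cg + Mg * Ch), fun c r hr => ?_⟩, ?_⟩
  · calc osc2 (fun p : ℝ × ℝ => g p.1 * h p.2) c r
        ≤ 2 * (Mh * osc1 g c.1 r + Mg * osc1 h c.2 r) := key c r hr
      _ ≤ 2 * (Mh * Cg + Mg * Ch) := by
          have e1 := hCg c.1 r hr
          have e2 := hCh c.2 r hr
          nlinarith
  · intro δ hδ
    obtain ⟨ag, hag, hgδ⟩ := hgv (δ / (4 * (Mh + 1))) (by positivity)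
    obtain ⟨ah, hah, hhδ⟩ := hhv (δ / (4 * (Mg + 1))) (by positivity)
    refine ⟨min ag ah, lt_min hag hah, fun c r hr hra => ?_⟩
    have h1 : osc1 g c.1 r ≤ δ / (4 * (Mh + 1)) :=
      hgδ c.1 r hr (hra.trans (min_le_left _ _))
    have h2 : osc1 h c.2 r ≤ δ / (4 * (Mg + 1)) :=
      hhδ c.2 r hr (hra.trans (min_le_right _ _))
    have e1 : Mh * osc1 g c.1 r ≤ δ / 4 := by
      have hle : Mh * osc1 g c.1 r ≤ Mh * (δ / (4 * (Mh + 1))) :=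
        mul_le_mul_of_nonneg_left h1 hMh0
      have heq : (Mh + 1) * (δ / (4 * (Mh + 1))) = δ / 4 := by
        have hne : Mh + 1 ≠ 0 := by positivity
        field_simp
      nlinarith [div_nonneg hδ.le (by positivity : (0:ℝ) ≤ 4 * (Mh + 1))]
    have e2 : Mg * osc1 h c.2 r ≤ δ / 4 := by
      have hle : Mg * osc1 h c.2 r ≤ Mg * (δ / (4 * (Mg + 1))) :=
        mul_le_mul_of_nonneg_left h2 hMg0
      have heq : (Mg + 1) * (δ / (4 * (Mg + 1))) = δ / 4 := by
        have hne : Mg + 1 ≠ 0 := by positivity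
        field_simp
      nlinarith [div_nonneg hδ.le (by positivity : (0:ℝ) ≤ 4 * (Mg + 1))]
    calc osc2 (fun p : ℝ × ℝ => g p.1 * h p.2) c r
        ≤ 2 * (Mh * osc1 g c.1 r + Mg * osc1 h c.2 r) := key c r hr
      _ ≤ δ := by linarith
end
end

section
/- Let F ∈ VMO(ℝ²) ∩ L^∞(ℝ²) satisfy, for almost every (x,y), F(x+1,y) = e^{2πiy} F(x,y) and F(x,y+1) = F(x,y). Then ess inf |F| = 0, i.e. for every d > 0 the set {(x,y) : |F(x,y)| < d} has positive Lebesgue measure. -/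
open MeasureTheory Real Complex
open scoped FourierTransform ENNReal

noncomputable section

/-- For `z` within `1/10` of `1`: nonzero, positive real part, small arg. -/
lemma close_facts {z : ℂ} (hz : ‖z - 1‖ ≤ 1/10) :
    z ≠ 0 ∧ 0 < z.re ∧ |(Complex.log z).im| ≤ π/4 := by
  have hre1 : |(z - 1).re| ≤ ‖z - 1‖ := Complex.abs_re_le_norm (z - 1)
  have him1 : |(z - 1).im| ≤ ‖z - 1‖ := Complex.abs_im_le_norm (z - 1)
  have hzre : (9:ℝ)/10 ≤ z.re := by
    have : (z - 1).re = z.re - 1 := by simp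
    rw [this] at hre1
    have := abs_le.1 hre1
    linarith
  have hzim : |z.im| ≤ 1/10 := by
    have : (z - 1).im = z.im := by simp
    rw [this] at him1; linarith
  have habs : (9:ℝ)/10 ≤ ‖z‖ := le_trans hzre (Complex.re_le_norm z)
  have hzpos : 0 < z.re := by linarith
  have hzne : z ≠ 0 := by
    intro h; rw [h] at hzpos; simp at hzpos
  refine ⟨hzne, hzpos, ?_⟩
  rw [Complex.log_im, Complex.arg_of_re_nonneg hzpos.le]
  have habs' : (0:ℝ) < ‖z‖ := by linarith
  have ht : |z.im / ‖z‖| ≤ 1/9 := by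
    rw [abs_div, abs_of_pos habs']
    rw [div_le_div_iff₀ habs' (by norm_num)]
    nlinarith
  have ht' := abs_le.1 ht
  have hs : (1:ℝ)/9 ≤ Real.sin (π/4) := by
    rw [Real.sin_pi_div_four]
    nlinarith [Real.sq_sqrt (by norm_num : (2:ℝ) ≥ 0), Real.sqrt_nonneg 2,
      Real.one_le_sqrt.2 (by norm_num : (1:ℝ) ≤ 2)]
  rw [abs_le]
  constructor
  · rw [Real.le_arcsin_iff_sin_le' ⟨by linarith [pi_pos], by linarith [pi_pos]⟩]
    rw [Real.sin_neg, Real.sin_pi_div_four]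
    have h2 : (1:ℝ)/9 ≤ Real.sqrt 2 / 2 := by
      nlinarith [Real.sq_sqrt (by norm_num : (2:ℝ) ≥ 0), Real.sqrt_nonneg 2,
        Real.one_le_sqrt.2 (by norm_num : (1:ℝ) ≤ 2)]
    rw [Real.sin_pi_div_four] at hs
    linarith [ht'.1]
  · rw [Real.arcsin_le_iff_le_sin' ⟨by linarith [pi_pos], by linarith [pi_pos]⟩]
    linarith [ht'.2]

lemma telescope_prod (g : ℕ → ℂ) (hg : ∀ j, g j ≠ 0) (n : ℕ) :
    ∏ j ∈ Finset.range n, g (j+1) / g j = g n / g 0 := by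
  induction n with
  | zero => rw [Finset.prod_range_zero, div_self (hg 0)]
  | succ n ih =>
    rw [Finset.prod_range_succ, ih, div_mul_div_comm, mul_comm (g 0) (g n),
      mul_div_mul_left _ _ (hg n)]

/-- The core topological obstruction: no continuous nowhere-small function on `ℝ²`
can be periodic in `y` and approximately quasi-periodic in `x`. -/
lemma no_good_G (d' : ℝ) (hd' : 0 < d') (G : ℝ × ℝ → ℂ) (hG : Continuous G)
    (hlow : ∀ p, d' ≤ ‖G p‖)
    (hper : ∀ p : ℝ × ℝ, G (p.1, p.2 + 1) = G p)
    (hqp : ∀ p : ℝ × ℝ,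
      ‖G (p.1 + 1, p.2) - Complex.exp (2*π*Complex.I*(p.2:ℂ)) * G p‖ ≤ d'/10) :
    False := by
  have hGne : ∀ p : ℝ × ℝ, G p ≠ 0 := by
    intro p h
    have := hlow p; rw [h] at this; simp at this; linarith
  set E : ℝ → ℂ := fun y => Complex.exp (2*π*Complex.I*(y:ℂ)) with hE
  have hEne : ∀ y, E y ≠ 0 := fun y => Complex.exp_ne_zero _
  have hEnorm : ∀ y, ‖E y‖ = 1 := by
    intro y
    simp only [hE, Complex.norm_exp]
    have : (2*π*Complex.I*(y:ℂ)).re = 0 := by simp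
    rw [this, Real.exp_zero]
  have hEadd : ∀ y z : ℝ, E (y + z) = E y * E z := by
    intro y z
    simp only [hE, ← Complex.exp_add]
    congr 1
    push_cast
    ring
  have hEper : ∀ y, E (y + 1) = E y := by
    intro y
    rw [hEadd]
    have h1 : E 1 = 1 := by
      simp only [hE, Complex.ofReal_one, mul_one]
      exact Complex.exp_two_pi_mul_I
    rw [h1, mul_one]
  -- the ratio ρ
  set ρ : ℝ → ℂ := fun y => G (1, y) / (E y * G (0, y)) with hρdef
  have hρrel : ∀ y, G (1, y) = ρ y * (E y * G (0, y)) := by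
    intro y
    exact (div_mul_cancel₀ _ (mul_ne_zero (hEne y) (hGne _))).symm
  have hρne : ∀ y, ρ y ≠ 0 :=
    fun y => div_ne_zero (hGne _) (mul_ne_zero (hEne y) (hGne _))
  have hρclose : ∀ y, ‖ρ y - 1‖ ≤ 1/10 := by
    intro y
    have hden : ‖E y * G (0, y)‖ = ‖G (0, y)‖ := by
      rw [norm_mul, hEnorm, one_mul]
    have h1 : ρ y - 1 = (G (1, y) - E y * G (0, y)) / (E y * G (0, y)) := by
      simp only [hρdef]
      rw [div_sub_one (mul_ne_zero (hEne y) (hGne _))]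
    rw [h1, norm_div, hden]
    have hnum : ‖G (1, y) - E y * G (0, y)‖ ≤ d'/10 := by
      have := hqp (0, y); simpa using this
    have hd0 : d' ≤ ‖G (0, y)‖ := hlow _
    calc ‖G (1, y) - E y * G (0, y)‖ / ‖G (0, y)‖ ≤ (d'/10) / d' :=
          div_le_div₀ (by positivity) hnum hd' hd0
      _ = 1/10 := by field_simp
  have hρper : ∀ y, ρ (y + 1) = ρ y := by
    intro y
    simp only [hρdef]
    rw [hEper]
    have h1 : G (1, y + 1) = G (1, y) := hper (1, y)
    have h2 : G (0, y + 1) = G (0, y) := hper (0, y)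
    rw [h1, h2]
  -- uniform continuity on the unit square
  have hK : IsCompact ((Set.Icc (0:ℝ) 1) ×ˢ (Set.Icc (0:ℝ) 1)) :=
    isCompact_Icc.prod isCompact_Icc
  have hUC := (hK.uniformContinuousOn_of_continuous hG.continuousOn)
  rw [Metric.uniformContinuousOn_iff] at hUC
  obtain ⟨δ, hδ, hδ'⟩ := hUC (d'/10) (by positivity)
  obtain ⟨N, hN⟩ := exists_nat_gt (max 3 (1/δ))
  have hN3 : (3:ℝ) < N := lt_of_le_of_lt (le_max_left _ _) hN
  have hN0 : (0:ℝ) < N := by linarith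
  have hNδ : 1/(N:ℝ) < δ := by
    rw [div_lt_iff₀ hN0]
    have h1 : 1/δ < N := lt_of_le_of_lt (le_max_right _ _) hN
    calc (1:ℝ) = δ * (1/δ) := by field_simp
      _ < δ * N := mul_lt_mul_of_pos_left h1 hδ
  have hNne : (N:ℂ) ≠ 0 := by exact_mod_cast ne_of_gt hN0
  -- grid points
  set Y : ℕ → ℝ := fun j => (j:ℝ)/N with hY
  have hYmem : ∀ j : ℕ, j ≤ N → Y j ∈ Set.Icc (0:ℝ) 1 := by
    intro j hj
    constructor
    · positivity
    · rw [hY]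
      rw [div_le_one hN0]
      exact_mod_cast hj
  have hYsucc : ∀ j : ℕ, Y (j+1) = Y j + 1/N := by
    intro j; simp only [hY]; push_cast; ring
  have hYN : Y N = 1 := by simp only [hY]; field_simp
  have hY0 : Y 0 = 0 := by simp [hY]
  -- the local ratios
  set r : ℝ → ℕ → ℂ := fun x j => G (x, Y (j+1)) / G (x, Y j) with hr
  have hrdef : ∀ x j, r x j = G (x, Y (j+1)) / G (x, Y j) := fun x j => rfl
  have hrne : ∀ x j, r x j ≠ 0 := fun x j => div_ne_zero (hGne _) (hGne _)
  have hrclose : ∀ x ∈ Set.Icc (0:ℝ) 1, ∀ j < N, ‖r x j - 1‖ ≤ 1/10 := by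
    intro x hx j hj
    have hj1 : j + 1 ≤ N := hj
    have hp : (x, Y (j+1)) ∈ (Set.Icc (0:ℝ) 1) ×ˢ (Set.Icc (0:ℝ) 1) :=
      ⟨hx, hYmem _ hj1⟩
    have hq : (x, Y j) ∈ (Set.Icc (0:ℝ) 1) ×ˢ (Set.Icc (0:ℝ) 1) :=
      ⟨hx, hYmem _ (le_of_lt hj)⟩
    have hdist : dist ((x, Y (j+1)) : ℝ × ℝ) (x, Y j) < δ := by
      rw [Prod.dist_eq]
      simp only [dist_self]
      have hdd : dist (Y (j+1)) (Y j) = 1/N := by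
        rw [hYsucc j, Real.dist_eq]
        have h9 : Y j + 1/(N:ℝ) - Y j = 1/N := by ring
        rw [h9, abs_of_pos (by positivity : (0:ℝ) < 1/(N:ℝ))]
      rw [hdd]
      exact max_lt hδ hNδ
    have hGd : ‖G (x, Y (j+1)) - G (x, Y j)‖ ≤ d'/10 := by
      have := hδ' _ hp _ hq hdist
      rw [dist_eq_norm] at this
      linarith
    have h1 : r x j - 1 = (G (x, Y (j+1)) - G (x, Y j)) / G (x, Y j) := by
      rw [hrdef, div_sub_one (hGne _)]
    rw [h1, norm_div]
    have hd0 : d' ≤ ‖G (x, Y j)‖ := hlow _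
    calc ‖G (x, Y (j+1)) - G (x, Y j)‖ / ‖G (x, Y j)‖ ≤ (d'/10) / d' :=
          div_le_div₀ (by positivity) hGd hd' hd0
      _ = 1/10 := by field_simp
  -- the winding sum
  set w : ℝ → ℂ := fun x => ∑ j ∈ Finset.range N, Complex.log (r x j) with hw
  have hwdef : ∀ x, w x = ∑ j ∈ Finset.range N, Complex.log (r x j) := fun x => rfl
  have hwint : ∀ x : ℝ, ∃ k : ℤ, w x = k * (2*π*Complex.I) := by
    intro x
    have hexp : Complex.exp (w x) = 1 := by
      rw [hwdef, Complex.exp_sum]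
      rw [Finset.prod_congr rfl (fun j _ => Complex.exp_log (hrne x j))]
      have htel : ∏ j ∈ Finset.range N, r x j = G (x, Y N) / G (x, Y 0) :=
        telescope_prod (fun j => G (x, Y j)) (fun j => hGne _) N
      rw [htel, hYN, hY0]
      have hG10 : G (x, 1) = G (x, 0) := by
        have := hper (x, 0); simpa using this
      rw [hG10, div_self (hGne _)]
    exact Complex.exp_eq_one_iff.1 hexp
  have hwcont : ContinuousOn w (Set.Icc (0:ℝ) 1) := by
    rw [hw]
    apply continuousOn_finset_sum
    intro j hj
    rw [Finset.mem_range] at hj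
    apply ContinuousOn.clog
    · apply ContinuousOn.div
      · exact (hG.comp (continuous_id.prodMk continuous_const)).continuousOn
      · exact (hG.comp (continuous_id.prodMk continuous_const)).continuousOn
      · exact fun x hx => hGne _
    · intro x hx
      rw [Complex.mem_slitPlane_iff]
      exact Or.inl (close_facts (hrclose x hx j hj)).2.1
  have h01 : (0:ℝ) ∈ Set.Icc (0:ℝ) 1 := by norm_num
  have h11 : (1:ℝ) ∈ Set.Icc (0:ℝ) 1 := by norm_num
  -- make everything opaque so that automation cannot unfold definitions
  clear_value w r Y ρ E
  have hImdiv : (2*(π:ℂ)*Complex.I/(N:ℂ)).im = 2*π/N := by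
    have hcast : 2*(π:ℂ)*Complex.I/(N:ℂ) = ((2*π/(N:ℝ) : ℝ):ℂ) * Complex.I := by
      push_cast
      field_simp
    rw [hcast]
    simp
  have hkey : w 1 = w 0 + 2*π*Complex.I := by
    have hterm : ∀ j < N, Complex.log (r 1 j) =
        Complex.log (r 0 j) + 2*π*Complex.I/N
          + (Complex.log (ρ (Y (j+1))) - Complex.log (ρ (Y j))) := by
      intro j hj
      have e3 : E (Y (j+1)) = E (Y j) * Complex.exp (2*π*Complex.I/N) := by
        rw [hYsucc j, hEadd]
        congr 1
        simp only [hE]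
        congr 1
        push_cast
        field_simp
      have hmul : r 1 j = r 0 j * Complex.exp (2*π*Complex.I/N) * (ρ (Y (j+1)) / ρ (Y j)) := by
        rw [hrdef 1 j, hrdef 0 j, hρrel (Y (j+1)), hρrel (Y j), e3]
        have hne1 : E (Y j) ≠ 0 := hEne _
        have hne2 : G (0, Y (j+1)) ≠ 0 := hGne _
        have hne3 : G (0, Y j) ≠ 0 := hGne _
        have hne4 : ρ (Y j) ≠ 0 := hρne _
        have hne4' : ρ (Y (j+1)) ≠ 0 := hρne _
        have hne5 : Complex.exp (2*π*Complex.I/(N:ℂ)) ≠ 0 := Complex.exp_ne_zero _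
        field_simp
      set D : ℂ := Complex.log (r 1 j) - Complex.log (r 0 j) - 2*π*Complex.I/N
          - Complex.log (ρ (Y (j+1))) + Complex.log (ρ (Y j)) with hD
      have hexpD : Complex.exp D = 1 := by
        rw [hD]
        simp only [Complex.exp_add, Complex.exp_sub]
        rw [Complex.exp_log (hrne 1 j), Complex.exp_log (hrne 0 j),
          Complex.exp_log (hρne _), Complex.exp_log (hρne _)]
        rw [hmul]
        have hne4 : ρ (Y j) ≠ 0 := hρne _
        have hne4' : ρ (Y (j+1)) ≠ 0 := hρne _
        have hne5 : Complex.exp (2*π*Complex.I/(N:ℂ)) ≠ 0 := Complex.exp_ne_zero _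
        have hne6 : r 0 j ≠ 0 := hrne 0 j
        field_simp
      obtain ⟨k, hk⟩ := Complex.exp_eq_one_iff.1 hexpD
      have h1 := (close_facts (hrclose 1 h11 j hj)).2.2
      have h2 := (close_facts (hrclose 0 h01 j hj)).2.2
      have h3 := (close_facts (hρclose (Y (j+1)))).2.2
      have h4 := (close_facts (hρclose (Y j))).2.2
      have hπ := Real.pi_pos
      have hImD : |D.im| < 2*π := by
        have hDim : D.im = (Complex.log (r 1 j)).im - (Complex.log (r 0 j)).im
            - 2*π/N - (Complex.log (ρ (Y (j+1)))).im + (Complex.log (ρ (Y j))).im := by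
          rw [hD]
          simp only [Complex.add_im, Complex.sub_im, hImdiv]
        have hNbound : 2*π/N < 2*π/3 :=
          div_lt_div_of_pos_left (by positivity) (by norm_num) hN3
        have hNpos : 0 < 2*π/(N:ℝ) := by positivity
        have hb1 := abs_le.1 h1
        have hb2 := abs_le.1 h2
        have hb3 := abs_le.1 h3
        have hb4 := abs_le.1 h4
        rw [hDim, abs_lt]
        constructor <;> linarith [hb1.1, hb1.2, hb2.1, hb2.2, hb3.1, hb3.2, hb4.1, hb4.2]
      have hk0 : k = 0 := by
        have hDim2 : D.im = k * (2*π) := by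
          rw [hk]
          simp
        rw [hDim2] at hImD
        have habs : |(k:ℝ)| < 1 := by
          have h2π : (0:ℝ) < 2*π := by positivity
          rw [abs_mul, abs_of_pos h2π] at hImD
          nlinarith [abs_nonneg ((k:ℝ))]
        have hki : |k| < 1 := by
          exact_mod_cast (by rwa [← Int.cast_abs] at habs : ((|k|:ℤ):ℝ) < 1)
        rcases abs_lt.1 hki with ⟨ha, hb⟩
        omega
      have hD0 : D = 0 := by rw [hk, hk0]; simp
      rw [hD] at hD0
      linear_combination hD0
    have hconst : ((N:ℂ)) * (2*π*Complex.I/N) = 2*π*Complex.I := by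
      field_simp
    calc w 1 = ∑ j ∈ Finset.range N, (Complex.log (r 0 j) + 2*π*Complex.I/N
          + (Complex.log (ρ (Y (j+1))) - Complex.log (ρ (Y j)))) := by
          rw [hwdef]
          exact Finset.sum_congr rfl (fun j hj => hterm j (Finset.mem_range.1 hj))
      _ = w 0 + 2*π*Complex.I := by
          rw [Finset.sum_add_distrib, Finset.sum_add_distrib,
            Finset.sum_range_sub (fun j => Complex.log (ρ (Y j))),
            Finset.sum_const, Finset.card_range]
          have hρ10 : ρ (Y N) = ρ (Y 0) := by
            rw [hYN, hY0]
            have := hρper 0; simpa using this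
          rw [hρ10, sub_self, add_zero, nsmul_eq_mul, hconst, hwdef]
  -- final contradiction by the intermediate value theorem
  obtain ⟨k0, hk0⟩ := hwint 0
  obtain ⟨k1, hk1⟩ := hwint 1
  have hπ := Real.pi_pos
  -- IVT on the imaginary part
  have hφcont : ContinuousOn (fun x => (w x).im) (Set.Icc (0:ℝ) 1) :=
    Complex.continuous_im.comp_continuousOn hwcont
  have hφ0 : (w 0).im = k0 * (2*π) := by rw [hk0]; simp
  have hφ1 : (w 1).im = k0 * (2*π) + 2*π := by
    have : (w 1).im = (w 0).im + 2*π := by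
      rw [hkey]
      simp
    rw [this, hφ0]
  have hmem : (k0*(2*π) + π) ∈ Set.Icc ((w (0:ℝ)).im) ((w (1:ℝ)).im) := by
    rw [hφ0, hφ1]
    constructor <;> linarith
  obtain ⟨x, hx, hφx⟩ := intermediate_value_Icc (by norm_num : (0:ℝ) ≤ 1) hφcont hmem
  obtain ⟨k, hk⟩ := hwint x
  have hkx : (w x).im = k * (2*π) := by rw [hk]; simp
  have hφx' : (w x).im = k0*(2*π) + π := hφx
  rw [hkx] at hφx'
  have hcast : (2*(k:ℝ)) = 2*(k0:ℝ) + 1 := by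
    have hπne : π ≠ 0 := ne_of_gt hπ
    nlinarith [hφx']
  have hint : (2*k : ℤ) = 2*k0 + 1 := by exact_mod_cast hcast
  omega

set_option maxHeartbeats 2000000 in
/-- a quasi-periodic `F ∈ VMO(ℝ²) ∩ L^∞(ℝ²)` has `ess inf |F| = 0`:
for every `d > 0` the set `{|F| < d}` has positive measure. -/
theorem stmt17 (F : ℝ × ℝ → ℂ) (hvmo : IsVMO2 F) (hb : MemLp F ⊤ volume)
    (hqp : ∀ᵐ p : ℝ × ℝ,
      F (p.1 + 1, p.2) = Complex.exp (2 * Real.pi * Complex.I * (p.2 : ℂ)) * F p ∧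
      F (p.1, p.2 + 1) = F p) :
    ∀ d > (0:ℝ), 0 < volume {p : ℝ × ℝ | ‖F p‖ < d} := by
  intro d hd
  by_contra hcon
  push_neg at hcon
  have hnull : volume {p : ℝ × ℝ | ‖F p‖ < d} = 0 := le_antisymm hcon (by simp)
  have hae : ∀ᵐ p : ℝ × ℝ, d ≤ ‖F p‖ := by
    rw [ae_iff]
    convert hnull using 2
    ext p
    simp [not_le]
  obtain ⟨hloc, hbmo, hsmall⟩ := hvmo
  obtain ⟨a, ha, hosc⟩ := hsmall (d/2) (by positivity)
  -- essential bound
  set M : ℝ := (eLpNormEssSup F volume).toReal with hM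
  have hMtop : eLpNormEssSup F volume ≠ ⊤ := by
    have h := hb.2
    rw [eLpNorm_exponent_top] at h
    exact h.ne
  have hMae : ∀ᵐ p : ℝ × ℝ, ‖F p‖ ≤ M := by
    filter_upwards [ae_le_eLpNormEssSup (f := F) (μ := volume)] with p hp
    have h2 := ENNReal.toReal_mono hMtop hp
    simpa [hM] using h2
  have hM0 : (0:ℝ) ≤ M := ENNReal.toReal_nonneg
  -- choice of the scale r
  set r : ℝ := min a (min (d/(400*(M+1))) (1/7)) with hrdef
  have hr0 : 0 < r := by
    apply lt_min ha
    apply lt_min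
    · positivity
    · norm_num
  have hra : r ≤ a := min_le_left _ _
  have hrd : r ≤ d/(400*(M+1)) := le_trans (min_le_right _ _) (min_le_left _ _)
  have hr7 : r ≤ 1/7 := le_trans (min_le_right _ _) (min_le_right _ _)
  -- cube facts
  have hcube_ms : ∀ c : ℝ × ℝ, MeasurableSet (cube2 c r) := fun c =>
    measurableSet_Icc.prod measurableSet_Icc
  have hcube_vol : ∀ c : ℝ × ℝ,
      volume (cube2 c r) = ENNReal.ofReal (2*r) * ENNReal.ofReal (2*r) := by
    intro c
    rw [cube2, Measure.volume_eq_prod, Measure.prod_prod, Real.volume_Icc, Real.volume_Icc,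
      show c.1 + r - (c.1 - r) = 2*r by ring, show c.2 + r - (c.2 - r) = 2*r by ring]
  have hvol_toReal : ∀ c : ℝ × ℝ, (volume (cube2 c r)).toReal = 4*r^2 := by
    intro c
    rw [hcube_vol c, ENNReal.toReal_mul, ENNReal.toReal_ofReal (by positivity)]
    ring
  have hvol_ne_top : ∀ c : ℝ × ℝ, volume (cube2 c r) ≠ ⊤ := by
    intro c
    rw [hcube_vol c]
    exact ENNReal.mul_ne_top ENNReal.ofReal_ne_top ENNReal.ofReal_ne_top
  have hvol_pos : ∀ c : ℝ × ℝ, 0 < (volume (cube2 c r)).toReal := by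
    intro c
    rw [hvol_toReal c]
    positivity
  -- integrability on cubes
  haveI hfin : ∀ c : ℝ × ℝ, IsFiniteMeasure (volume.restrict (cube2 c r)) := by
    intro c
    constructor
    rw [Measure.restrict_apply_univ]
    exact (hvol_ne_top c).lt_top
  have hInt : ∀ c : ℝ × ℝ, IntegrableOn F (cube2 c r) volume := by
    intro c
    haveI := hfin c
    exact memLp_one_iff_integrable.1 ((hb.restrict (cube2 c r)).mono_exponent le_top)
  -- the mollified function
  set G : ℝ × ℝ → ℂ := fun c => ⨍ p in cube2 c r, F p with hGdef0
  have hGdef : ∀ c, G c = ((volume (cube2 c r)).toReal)⁻¹ • ∫ p in cube2 c r, F p :=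
    fun c => setAverage_eq _ _ _
  have hosc_eq : ∀ c, osc2 F c r = ⨍ x in cube2 c r, ‖F x - G c‖ := fun c => rfl
  -- lower bound for ‖G c‖
  have hGlow : ∀ c : ℝ × ℝ, d/2 ≤ ‖G c‖ := by
    intro c
    haveI := hfin c
    set A : ℝ := (volume (cube2 c r)).toReal with hA
    have hA0 : 0 < A := hvol_pos c
    have hIntN : IntegrableOn (fun p => ‖F p‖) (cube2 c r) volume := (hInt c).norm
    have hIntD : IntegrableOn (fun p => ‖F p - G c‖) (cube2 c r) volume :=
      ((hInt c).sub (integrable_const (G c))).norm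
    have h1 : d * A ≤ ∫ p in cube2 c r, ‖F p‖ := by
      have hconst : ∫ _ in cube2 c r, d ∂volume = A • d := setIntegral_const d
      have hmono : ∫ _ in cube2 c r, d ∂volume ≤ ∫ p in cube2 c r, ‖F p‖ := by
        apply integral_mono_ae (integrable_const d) hIntN
        exact ae_restrict_of_ae hae
      rw [hconst, smul_eq_mul] at hmono
      linarith
    have h2 : ∫ p in cube2 c r, ‖F p‖ ≤ (∫ p in cube2 c r, ‖F p - G c‖) + ‖G c‖ * A := by
      have hmono : ∫ p in cube2 c r, ‖F p‖ ≤ ∫ p in cube2 c r, (‖F p - G c‖ + ‖G c‖) := by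
        apply integral_mono hIntN (hIntD.add (integrable_const _))
        intro p
        calc ‖F p‖ = ‖(F p - G c) + G c‖ := by ring_nf
          _ ≤ ‖F p - G c‖ + ‖G c‖ := norm_add_le _ _
      rw [integral_add hIntD (integrable_const _), setIntegral_const, smul_eq_mul,
        mul_comm] at hmono
      exact hmono
    have h3 : ∫ p in cube2 c r, ‖F p - G c‖ ≤ (d/2) * A := by
      have hosc' : osc2 F c r ≤ d/2 := hosc c r hr0 hra
      rw [hosc_eq c, setAverage_eq, smul_eq_mul, measureReal_def, ← hA] at hosc'
      have h4 : (0:ℝ) ≤ ∫ p in cube2 c r, ‖F p - G c‖ :=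
        integral_nonneg (fun p => norm_nonneg _)
      rw [inv_mul_le_iff₀ hA0] at hosc'  -- A⁻¹ * I ≤ d/2 → I ≤ d/2 * A
      linarith [hosc']
    nlinarith [h1, h2, h3, hA0, norm_nonneg (G c)]
  -- continuity of G
  have hGcont : Continuous G := by
    have hincl : ∀ c₀ c₁ : ℝ × ℝ, dist c₁ c₀ ≤ r →
        cube2 c₁ r \ cube2 c₀ r ⊆ cube2 c₀ (r + dist c₁ c₀) \ cube2 c₀ (r - dist c₁ c₀) := by
      intro c₀ c₁ hle x hx
      have h0 : (0:ℝ) ≤ dist c₁ c₀ := dist_nonneg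
      have h1 : dist c₁.1 c₀.1 ≤ dist c₁ c₀ := by
        rw [Prod.dist_eq]; exact le_max_left _ _
      have h2 : dist c₁.2 c₀.2 ≤ dist c₁ c₀ := by
        rw [Prod.dist_eq]; exact le_max_right _ _
      rw [Real.dist_eq] at h1 h2
      have h1' := abs_le.1 h1
      have h2' := abs_le.1 h2
      obtain ⟨hx1, hx2⟩ := hx
      rw [cube2, Set.mem_prod, Set.mem_Icc, Set.mem_Icc] at hx1
      constructor
      · rw [cube2, Set.mem_prod, Set.mem_Icc, Set.mem_Icc]
        exact ⟨⟨by linarith [hx1.1.1, h1'.1], by linarith [hx1.1.2, h1'.2]⟩,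
          ⟨by linarith [hx1.2.1, h2'.1], by linarith [hx1.2.2, h2'.2]⟩⟩
      · intro hmem
        apply hx2
        rw [cube2, Set.mem_prod, Set.mem_Icc, Set.mem_Icc] at hmem ⊢
        exact ⟨⟨by linarith [hmem.1.1], by linarith [hmem.1.2]⟩,
          ⟨by linarith [hmem.2.1], by linarith [hmem.2.2]⟩⟩
    have hmeas : ∀ c₀ c₁ : ℝ × ℝ, dist c₁ c₀ ≤ r →
        (volume (cube2 c₁ r \ cube2 c₀ r)).toReal ≤ 16*r*(dist c₁ c₀) := by
      intro c₀ c₁ hle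
      set s := dist c₁ c₀ with hs
      have hs0 : (0:ℝ) ≤ s := dist_nonneg
      have hsub2 : cube2 c₀ (r - s) ⊆ cube2 c₀ (r + s) := by
        intro x hx
        rw [cube2, Set.mem_prod, Set.mem_Icc, Set.mem_Icc] at hx ⊢
        exact ⟨⟨by linarith [hx.1.1], by linarith [hx.1.2]⟩,
          ⟨by linarith [hx.2.1], by linarith [hx.2.2]⟩⟩
      have hvol1 : volume (cube2 c₀ (r+s)) = ENNReal.ofReal (4*(r+s)^2) := by
        rw [cube2, Measure.volume_eq_prod, Measure.prod_prod, Real.volume_Icc, Real.volume_Icc,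
          show c₀.1 + (r+s) - (c₀.1 - (r+s)) = 2*(r+s) by ring,
          show c₀.2 + (r+s) - (c₀.2 - (r+s)) = 2*(r+s) by ring,
          ← ENNReal.ofReal_mul (by positivity)]
        congr 1
        ring
      have hvol2 : volume (cube2 c₀ (r-s)) = ENNReal.ofReal (4*(r-s)^2) := by
        rw [cube2, Measure.volume_eq_prod, Measure.prod_prod, Real.volume_Icc, Real.volume_Icc,
          show c₀.1 + (r-s) - (c₀.1 - (r-s)) = 2*(r-s) by ring,
          show c₀.2 + (r-s) - (c₀.2 - (r-s)) = 2*(r-s) by ring,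
          ← ENNReal.ofReal_mul (by linarith)]
        congr 1
        ring
      have hdiff : volume (cube2 c₀ (r+s) \ cube2 c₀ (r-s))
          = ENNReal.ofReal (4*(r+s)^2) - ENNReal.ofReal (4*(r-s)^2) := by
        rw [measure_diff hsub2 (measurableSet_Icc.prod measurableSet_Icc).nullMeasurableSet
          (by rw [hvol2]; exact ENNReal.ofReal_ne_top), hvol1, hvol2]
      have hfin2 : volume (cube2 c₀ (r+s) \ cube2 c₀ (r-s)) ≠ ⊤ :=
        (lt_of_le_of_lt (measure_mono Set.diff_subset)
          (by rw [hvol1]; exact ENNReal.ofReal_lt_top)).ne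
      calc (volume (cube2 c₁ r \ cube2 c₀ r)).toReal
          ≤ (volume (cube2 c₀ (r+s) \ cube2 c₀ (r-s))).toReal :=
            ENNReal.toReal_mono hfin2 (measure_mono (hincl c₀ c₁ hle))
        _ ≤ 16*r*s := by
            rw [hdiff, ← ENNReal.ofReal_sub _ (by positivity),
              ENNReal.toReal_ofReal (by nlinarith)]
            nlinarith
    have key : ∀ c c' : ℝ × ℝ, dist c' c ≤ r → ‖G c' - G c‖ ≤ (8*(M+1)/r) * dist c' c := by
      intro c c' ht
      have ht0 : (0:ℝ) ≤ dist c' c := dist_nonneg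
      have ht' : dist c c' ≤ r := by rw [dist_comm]; exact ht
      have hsplit : (∫ p in cube2 c' r, F p) - ∫ p in cube2 c r, F p
          = (∫ p in cube2 c' r \ cube2 c r, F p) - ∫ p in cube2 c r \ cube2 c' r, F p := by
        have e1 := integral_inter_add_diff (μ := volume) (hcube_ms c) (hInt c')
        have e2 := integral_inter_add_diff (μ := volume) (hcube_ms c') (hInt c)
        rw [Set.inter_comm] at e2
        rw [← e1, ← e2]
        ring
      have hbound : ∀ c₀ c₁ : ℝ × ℝ, dist c₁ c₀ ≤ r →
          ‖∫ p in cube2 c₁ r \ cube2 c₀ r, F p‖ ≤ M * (16*r*(dist c₁ c₀)) := by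
        intro c₀ c₁ hle
        have hfin3 : volume (cube2 c₁ r \ cube2 c₀ r) < ⊤ :=
          lt_of_le_of_lt (measure_mono Set.diff_subset) (hvol_ne_top c₁).lt_top
        calc ‖∫ p in cube2 c₁ r \ cube2 c₀ r, F p‖
            ≤ M * (volume (cube2 c₁ r \ cube2 c₀ r)).toReal :=
              le_trans (norm_setIntegral_le_of_norm_le_const_ae hfin3 (ae_restrict_of_ae hMae))
                (le_of_eq rfl)
          _ ≤ M * (16*r*(dist c₁ c₀)) :=
              mul_le_mul_of_nonneg_left (hmeas c₀ c₁ hle) hM0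
      have hb1 := hbound c c' ht
      have hb2 := hbound c' c ht'
      rw [dist_comm c c'] at hb2
      have hnorm : ‖(∫ p in cube2 c' r, F p) - ∫ p in cube2 c r, F p‖
          ≤ 2 * M * (16*r*(dist c' c)) := by
        rw [hsplit]
        calc ‖(∫ p in cube2 c' r \ cube2 c r, F p) - ∫ p in cube2 c r \ cube2 c' r, F p‖
            ≤ ‖∫ p in cube2 c' r \ cube2 c r, F p‖ + ‖∫ p in cube2 c r \ cube2 c' r, F p‖ :=
              norm_sub_le _ _
          _ ≤ 2 * M * (16*r*(dist c' c)) := by linarith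
      rw [hGdef, hGdef, hvol_toReal, hvol_toReal, ← smul_sub, norm_smul, norm_inv,
        Real.norm_eq_abs, abs_of_pos (by positivity : (0:ℝ) < 4*r^2)]
      calc (4*r^2)⁻¹ * ‖(∫ p in cube2 c' r, F p) - ∫ p in cube2 c r, F p‖
          ≤ (4*r^2)⁻¹ * (2 * M * (16*r*(dist c' c))) := by
            apply mul_le_mul_of_nonneg_left hnorm (by positivity)
        _ ≤ (8*(M+1)/r) * dist c' c := by
            rw [div_mul_eq_mul_div, le_div_iff₀ hr0]
            have h9 : (4*r^2)⁻¹ * (2 * M * (16*r*(dist c' c))) * r = 8 * M * dist c' c := by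
              field_simp
              ring
            rw [h9]
            nlinarith
    rw [Metric.continuous_iff]
    intro c ε hε
    have hK0 : (0:ℝ) < 8*(M+1)/r := by positivity
    refine ⟨min r (ε/(2*(8*(M+1)/r))), by positivity, ?_⟩
    intro c' hc'
    have h1 : dist c' c ≤ r := le_of_lt (lt_of_lt_of_le hc' (min_le_left _ _))
    have h2 := key c c' h1
    rw [dist_eq_norm]
    have h3 : dist c' c < ε/(2*(8*(M+1)/r)) := lt_of_lt_of_le hc' (min_le_right _ _)
    calc ‖G c' - G c‖ ≤ (8*(M+1)/r) * dist c' c := h2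
      _ < (8*(M+1)/r) * (ε/(2*(8*(M+1)/r))) := mul_lt_mul_of_pos_left h3 hK0
      _ = ε/2 := by
          field_simp
      _ < ε := by linarith
  -- translation identity
  have htrans : ∀ (c v : ℝ × ℝ),
      ∫ p in cube2 (c + v) r, F p = ∫ p in cube2 c r, F (p + v) := by
    intro c v
    have hmp : MeasurePreserving (fun p : ℝ × ℝ => p + v) volume volume :=
      measurePreserving_add_right volume v
    have hemb : MeasurableEmbedding (fun p : ℝ × ℝ => p + v) :=
      (MeasurableEquiv.addRight v).measurableEmbedding
    have hpre : (fun p : ℝ × ℝ => p + v) ⁻¹' (cube2 (c + v) r) = cube2 c r := by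
      ext p
      simp only [cube2, Set.mem_preimage, Set.mem_prod, Set.mem_Icc, Prod.fst_add, Prod.snd_add]
      constructor <;> intro h <;>
        exact ⟨⟨by linarith [h.1.1], by linarith [h.1.2]⟩,
          ⟨by linarith [h.2.1], by linarith [h.2.2]⟩⟩
    rw [← hpre, hmp.setIntegral_preimage_emb hemb]
  -- exact periodicity of G in the second variable
  have hGper : ∀ c : ℝ × ℝ, G (c.1, c.2 + 1) = G c := by
    intro c
    have h0 : ((c.1, c.2 + 1) : ℝ × ℝ) = c + (0, 1) := by
      ext <;> simp
    rw [hGdef, hGdef, h0, htrans c (0,1), hcube_vol, hcube_vol]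
    congr 1
    apply setIntegral_congr_ae (hcube_ms c)
    filter_upwards [hqp] with p hp _
    have h1 : p + ((0:ℝ), (1:ℝ)) = (p.1, p.2 + 1) := by ext <;> simp
    rw [h1, hp.2]
  -- approximate quasi-periodicity of G in the first variable
  have hGqp : ∀ c : ℝ × ℝ,
      ‖G (c.1 + 1, c.2) - Complex.exp (2*π*Complex.I*(c.2:ℂ)) * G c‖ ≤ (d/2)/10 := by
    intro c
    haveI := hfin c
    set A : ℝ := (volume (cube2 c r)).toReal with hA
    have hA0 : 0 < A := hvol_pos c
    have h0 : ((c.1 + 1, c.2) : ℝ × ℝ) = c + (1, 0) := by ext <;> simp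
    have hvol_eq : (volume (cube2 (c + (1,0)) r)).toReal = A := by
      rw [hvol_toReal, hA, hvol_toReal]
    -- the shifted integral
    have h1 : ∫ p in cube2 (c + (1,0)) r, F p
        = ∫ p in cube2 c r, Complex.exp (2*π*Complex.I*(p.2:ℂ)) * F p := by
      rw [htrans c (1,0)]
      apply setIntegral_congr_ae (hcube_ms c)
      filter_upwards [hqp] with p hp _
      have he : p + ((1:ℝ), (0:ℝ)) = (p.1 + 1, p.2) := by ext <;> simp
      rw [he, hp.1]
    -- integrability of the phase-multiplied functions
    have hphase_cont : Continuous fun p : ℝ × ℝ => Complex.exp (2*π*Complex.I*(p.2:ℂ)) := by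
      apply Complex.continuous_exp.comp
      apply Continuous.mul continuous_const
      exact Complex.continuous_ofReal.comp continuous_snd
    have hIntE : IntegrableOn (fun p : ℝ × ℝ => Complex.exp (2*π*Complex.I*(p.2:ℂ)) * F p)
        (cube2 c r) volume := by
      apply Integrable.bdd_mul (c := 1) (hInt c) (hphase_cont.aestronglyMeasurable.restrict)
      refine Filter.Eventually.of_forall (fun p => ?_)
      rw [Complex.norm_exp]
      have : (2*(π:ℂ)*Complex.I*((p.2:ℝ):ℂ)).re = 0 := by simp
      rw [this, Real.exp_zero]
    have hIntE' : IntegrableOn (fun p : ℝ × ℝ => Complex.exp (2*π*Complex.I*(c.2:ℂ)) * F p)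
        (cube2 c r) volume := (hInt c).const_mul _
    -- the key pointwise estimate and integral bound
    have h2 : ‖(∫ p in cube2 c r, Complex.exp (2*π*Complex.I*(p.2:ℂ)) * F p)
        - ∫ p in cube2 c r, Complex.exp (2*π*Complex.I*(c.2:ℂ)) * F p‖ ≤ (14*r*M) * A := by
      rw [← integral_sub hIntE hIntE']
      apply norm_setIntegral_le_of_norm_le_const_ae ((hvol_ne_top c).lt_top)
      filter_upwards [ae_restrict_of_ae hMae, ae_restrict_mem (hcube_ms c)] with p hMp hmem
      have heq : Complex.exp (2*π*Complex.I*(p.2:ℂ)) * F p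
          - Complex.exp (2*π*Complex.I*(c.2:ℂ)) * F p
          = (Complex.exp (2*π*Complex.I*(p.2:ℂ)) - Complex.exp (2*π*Complex.I*(c.2:ℂ))) * F p := by
        ring
      rw [heq, norm_mul]
      have hp2 : |p.2 - c.2| ≤ r := by
        have h5 := hmem.2
        rw [cube2] at hmem
        have h6 := hmem.2
        rw [Set.mem_Icc] at h6
        rw [abs_le]
        constructor <;> linarith [h6.1, h6.2]
      have hphase : ‖Complex.exp (2*π*Complex.I*(p.2:ℂ)) - Complex.exp (2*π*Complex.I*(c.2:ℂ))‖
          ≤ 14*r := by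
        have hfactor : Complex.exp (2*π*Complex.I*(p.2:ℂ)) - Complex.exp (2*π*Complex.I*(c.2:ℂ))
            = Complex.exp (2*π*Complex.I*(c.2:ℂ))
              * (Complex.exp (2*π*Complex.I*((p.2 - c.2 : ℝ):ℂ)) - 1) := by
          rw [mul_sub, mul_one, ← Complex.exp_add]
          congr 1
          push_cast
          ring
        have hnorm1 : ‖Complex.exp (2*π*Complex.I*(c.2:ℂ))‖ = 1 := by
          rw [Complex.norm_exp]
          have : (2*(π:ℂ)*Complex.I*((c.2:ℝ):ℂ)).re = 0 := by simp
          rw [this, Real.exp_zero]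
        rw [hfactor, norm_mul, hnorm1, one_mul]
        have habs : ‖2*π*Complex.I*((p.2 - c.2:ℝ):ℂ)‖ = 2*π*|p.2 - c.2| := by
          rw [norm_mul, norm_mul, norm_mul, Complex.norm_I, Complex.norm_real, Complex.norm_real,
            Real.norm_eq_abs, Real.norm_eq_abs, Complex.norm_two]
          rw [abs_of_pos Real.pi_pos]
          ring
        have hπ315 : π < 3.15 := Real.pi_lt_d2
        have hπ0 := Real.pi_pos
        have hsmall : ‖2*π*Complex.I*((p.2 - c.2:ℝ):ℂ)‖ ≤ 1 := by
          rw [habs]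
          nlinarith [abs_nonneg (p.2 - c.2)]
        calc ‖Complex.exp (2*π*Complex.I*((p.2 - c.2:ℝ):ℂ)) - 1‖
            ≤ 2 * ‖2*π*Complex.I*((p.2 - c.2:ℝ):ℂ)‖ :=
              Complex.norm_exp_sub_one_le hsmall
          _ = 2*(2*π*|p.2 - c.2|) := by rw [habs]
          _ ≤ 14*r := by nlinarith [abs_nonneg (p.2 - c.2)]
      calc ‖Complex.exp (2*π*Complex.I*(p.2:ℂ)) - Complex.exp (2*π*Complex.I*(c.2:ℂ))‖ * ‖F p‖
          ≤ (14*r) * M := by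
            apply mul_le_mul hphase hMp (norm_nonneg _) (by positivity)
        _ = 14*r*M := by ring
    -- assemble
    have h3 : Complex.exp (2*π*Complex.I*(c.2:ℂ)) * G c
        = A⁻¹ • ∫ p in cube2 c r, Complex.exp (2*π*Complex.I*(c.2:ℂ)) * F p := by
      rw [hGdef, ← hA, integral_const_mul (Complex.exp (2*π*Complex.I*(c.2:ℂ))) F]
      exact mul_smul_comm _ _ _
    have h4 : G (c.1 + 1, c.2) = A⁻¹ • ∫ p in cube2 c r,
        Complex.exp (2*π*Complex.I*(p.2:ℂ)) * F p := by
      rw [h0, hGdef, h1]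
      congr 1
      rw [hvol_eq]
    rw [h4, h3, ← smul_sub]
    rw [norm_smul, norm_inv, Real.norm_eq_abs, abs_of_pos hA0]
    have h5 : A⁻¹ * ((14*r*M) * A) = 14*r*M := by field_simp
    have h6 : ‖(∫ p in cube2 c r, Complex.exp (2*π*Complex.I*(p.2:ℂ)) * F p)
        - ∫ p in cube2 c r, Complex.exp (2*π*Complex.I*(c.2:ℂ)) * F p‖ * A⁻¹ ≤ (14*r*M) * A * A⁻¹ := by
      apply mul_le_mul_of_nonneg_right h2 (by positivity)
    have h7 : 14*r*M ≤ (d/2)/10 := by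
      have hM1 : (0:ℝ) < 400*(M+1) := by positivity
      have h8 : r * (400*(M+1)) ≤ d := (le_div_iff₀ hM1).1 hrd
      nlinarith [hr0.le, hM0]
    calc A⁻¹ * ‖(∫ p in cube2 c r, Complex.exp (2*π*Complex.I*(p.2:ℂ)) * F p)
          - ∫ p in cube2 c r, Complex.exp (2*π*Complex.I*(c.2:ℂ)) * F p‖
        = ‖(∫ p in cube2 c r, Complex.exp (2*π*Complex.I*(p.2:ℂ)) * F p)
          - ∫ p in cube2 c r, Complex.exp (2*π*Complex.I*(c.2:ℂ)) * F p‖ * A⁻¹ := by ring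
      _ ≤ (14*r*M) * A * A⁻¹ := h6
      _ = 14*r*M := by field_simp
      _ ≤ (d/2)/10 := h7
  -- contradiction
  exact no_good_G (d/2) (by positivity) G hGcont hGlow hGper hGqp
end
end
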